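/- arXiv:1904.09468 — 8 statements merged into one kernel-verified Lean document; each statement's English description precedes it below -/
import Mathlib

section
/- Let f : ℝ → ℝ be three times continuously differentiable. Define H : ℝ² → ℝ by H(x,y) = (f(x) − f(y))/(x − y) if x ≠ y, and H(x,x) = f'(x). Then H is continuously differentiable on ℝ². -/
/-!
Off the diagonal, the fundamental theorem of calculus gives
`H (x, y) = ∫ t in 0..1, f' (y + t (x - y))`, and on the diagonal this integral is `f' x`, so the
identity holds on all of `ℝ²`. The right-hand side integrates the `C¹` function `f'` along a
continuous family of linear maps `ℝ² → ℝ`; differentiating under the integral sign (the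
derivative is bounded on compact sets) shows it is `C¹`.
-/

open Set Metric Filter intervalIntegral ContinuousLinearMap

section ParametricIntervalIntegral

variable {H E : Type*} [NormedAddCommGroup H] [NormedSpace ℝ H] [ProperSpace H]
  [NormedAddCommGroup E] [NormedSpace ℝ E] {F : H → ℝ → E} {F' : H → ℝ → H →L[ℝ] E} {a b : ℝ}

theorem hasFDerivAt_intervalIntegral_of_continuous
    (hF : Continuous fun q : H × ℝ => F q.1 q.2) (hF' : Continuous fun q : H × ℝ => F' q.1 q.2)
    (hderiv : ∀ x t, HasFDerivAt (F · t) (F' x t) x) (x₀ : H) :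
    HasFDerivAt (fun x => ∫ t in a..b, F x t) (∫ t in a..b, F' x₀ t) x₀ := by
  obtain ⟨C, hC⟩ := ((isCompact_closedBall x₀ 1).prod isCompact_uIcc).exists_bound_of_continuousOn
    hF'.continuousOn
  refine hasFDerivAt_integral_of_dominated_of_fderiv_le (bound := fun _ => C)
    (closedBall_mem_nhds x₀ one_pos) ?_ ?_ ?_ ?_ intervalIntegrable_const ?_
  · exact Eventually.of_forall fun x => (hF.comp (Continuous.prodMk_right x)).aestronglyMeasurable
  · exact (hF.comp (Continuous.prodMk_right x₀)).intervalIntegrable a b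
  · exact (hF'.comp (Continuous.prodMk_right x₀)).aestronglyMeasurable
  · exact MeasureTheory.ae_of_all _ fun t ht x hx => hC (x, t) ⟨hx, uIoc_subset_uIcc ht⟩
  · exact MeasureTheory.ae_of_all _ fun t _ x _ => hderiv x t

theorem contDiff_one_intervalIntegral_of_continuous
    (hF : Continuous fun q : H × ℝ => F q.1 q.2) (hF' : Continuous fun q : H × ℝ => F' q.1 q.2)
    (hderiv : ∀ x t, HasFDerivAt (F · t) (F' x t) x) :
    ContDiff ℝ 1 fun x => ∫ t in a..b, F x t := by
  have hasFDerivAt := hasFDerivAt_intervalIntegral_of_continuous (a := a) (b := b) hF hF' hderiv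
  rw [contDiff_one_iff_fderiv, funext fun x => (hasFDerivAt x).fderiv]
  exact ⟨fun x => (hasFDerivAt x).differentiableAt,
    continuous_parametric_intervalIntegral_of_continuous' hF' a b⟩

theorem contDiff_one_intervalIntegral_comp_clm {G : Type*} [NormedAddCommGroup G]
    [NormedSpace ℝ G] {g : G → E} (hg : ContDiff ℝ 1 g) {L : ℝ → H →L[ℝ] G} (hL : Continuous L) :
    ContDiff ℝ 1 fun x => ∫ t in a..b, g (L t x) :=
  contDiff_one_intervalIntegral_of_continuous (F' := fun x t => (fderiv ℝ g (L t x)).comp (L t))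
    (hg.continuous.comp (by fun_prop))
    (((hg.continuous_fderiv one_ne_zero).comp (by fun_prop)).clm_comp (hL.comp continuous_snd))
    fun x t => (hg.differentiable one_ne_zero (L t x)).hasFDerivAt.comp x (L t).hasFDerivAt

end ParametricIntervalIntegral

theorem smul_integral_deriv_comp_mul_add {E : Type*} [NormedAddCommGroup E] [NormedSpace ℝ E]
    [CompleteSpace E] {f : ℝ → E} (hf : ContDiff ℝ 1 f) (c d : ℝ) :
    c • ∫ t in (0 : ℝ)..1, deriv f (c * t + d) = f (c + d) - f d := by
  rw [smul_integral_comp_mul_add, mul_zero, zero_add, mul_one]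
  exact integral_deriv_eq_sub (fun x _ => hf.differentiable one_ne_zero x)
    ((hf.continuous_deriv le_rfl).intervalIntegrable _ _)

/-- If `f : ℝ → ℝ` is three times continuously differentiable and `H` is its
divided-difference (slope) function, extended to the diagonal by the derivative, then `H` is
continuously differentiable on `ℝ²`. -/
theorem divided_difference_C1
    (f : ℝ → ℝ) (hf : ContDiff ℝ 3 f)
    (H : ℝ × ℝ → ℝ)
    (hH_off : ∀ x y : ℝ, x ≠ y → H (x, y) = (f x - f y) / (x - y))
    (hH_diag : ∀ x : ℝ, H (x, x) = deriv f x) :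
    ContDiff ℝ 1 H := by
  have hf' : ContDiff ℝ 1 (deriv f) := (hf.of_le (by norm_num) : ContDiff ℝ (1 + 1) f).deriv'
  have hf1 : ContDiff ℝ 1 f := hf.of_le (by norm_num)
  let L : ℝ → ℝ × ℝ →L[ℝ] ℝ := fun t => t • (fst ℝ ℝ ℝ - snd ℝ ℝ ℝ) + snd ℝ ℝ ℝ
  have hL : Continuous L := by fun_prop
  suffices H = fun p => ∫ t in (0 : ℝ)..1, deriv f (L t p) from
    this ▸ contDiff_one_intervalIntegral_comp_clm hf' hL
  funext ⟨x, y⟩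
  simp only [L, add_apply, smul_apply, sub_apply, coe_fst', coe_snd', smul_eq_mul]
  rcases eq_or_ne x y with rfl | hxy
  · simp [hH_diag]
  · rw [hH_off x y hxy, div_eq_iff (sub_ne_zero.2 hxy)]
    simpa [mul_comm, eq_comm] using smul_integral_deriv_comp_mul_add hf1 (x - y) y
end

section
/- Let A : ℝ → ℝ be a strictly convex, twice continuously differentiable flux, let η : ℝ → ℝ be a strictly convex, twice continuously differentiable entropy, and let q : ℝ → ℝ be an associated entropy flux, i.e. q'(u) = A'(u)·η'(u) for all u. Let u_L, u_R, σ ∈ ℝ satisfy the Rankine–Hugoniot relation A(u_L) − A(u_R) = σ·(u_L − u_R). Then q(u_R) − q(u_L) ≤ σ·(η(u_R) − η(u_L)) if and only if u_L ≥ u_R. (That is, the shock (u_L, u_R, σ) is entropic for η if and only if it satisfies the Lax entropy condition u_L ≥ u_R.) -/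
/-- For a strictly convex `C²` flux `A`, a strictly convex `C²` entropy `η`, and
an entropy flux `q` with `q' = A'·η'`, a shock `(u_L, u_R, σ)` satisfying the Rankine–Hugoniot
relation is entropic for `η` if and only if it satisfies the Lax entropy condition
`u_L ≥ u_R`. -/
theorem shock_entropic_iff_lax
    (A η q : ℝ → ℝ)
    (hA : ContDiff ℝ 2 A) (hA_conv : StrictConvexOn ℝ Set.univ A)
    (hη : ContDiff ℝ 2 η) (hη_conv : StrictConvexOn ℝ Set.univ η)
    (hq : ∀ u : ℝ, HasDerivAt q (deriv A u * deriv η u) u)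
    (uL uR σ : ℝ)
    (hRH : A uL - A uR = σ * (uL - uR)) :
    q uR - q uL ≤ σ * (η uR - η uL) ↔ uR ≤ uL := by
  have hA' : Differentiable ℝ A := hA.differentiable (by norm_num)
  have hη' : Differentiable ℝ η := hη.differentiable (by norm_num)
  set s : ℝ → ℝ := fun v => (A uL - A v) / (uL - v) with hs_def
  set F : ℝ → ℝ := fun v => q v - q uL - s v * (η v - η uL) with hF_def
  have hFa : F uL = 0 := by simp [hF_def, hs_def]
  -- s equals the slope function of A at uL
  have hs_slope : s = slope A uL := by
    funext v
    have : slope A uL v = (A v - A uL) / (v - uL) := slope_def_field A uL v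
    rw [hs_def]
    simp only [this]
    rw [← neg_sub (A v) (A uL), ← neg_sub v uL, neg_div_neg_eq]
  -- derivative of F off uL
  have hderiv : ∀ v : ℝ, v ≠ uL →
      HasDerivAt F ((deriv A v - s v) * (deriv η v - (η v - η uL) / (v - uL))) v := by
    intro v hv
    have h0 : uL - v ≠ 0 := sub_ne_zero.2 (Ne.symm hv)
    have h0' : v - uL ≠ 0 := sub_ne_zero.2 hv
    have hAd : HasDerivAt A (deriv A v) v := (hA' v).hasDerivAt
    have hηd : HasDerivAt η (deriv η v) v := (hη' v).hasDerivAt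
    have num : HasDerivAt (fun x => A uL - A x) (-deriv A v) v := hAd.const_sub (A uL)
    have den : HasDerivAt (fun x => uL - x) (-1) v := by
      simpa using (hasDerivAt_id v).const_sub uL
    have hsd : HasDerivAt s
        ((-deriv A v * (uL - v) - (A uL - A v) * (-1)) / (uL - v) ^ 2) v :=
      num.div den h0
    have h1 : HasDerivAt (fun x => q x - q uL) (deriv A v * deriv η v) v :=
      (hq v).sub_const (q uL)
    have h2 : HasDerivAt (fun x => s x * (η x - η uL))
        (((-deriv A v * (uL - v) - (A uL - A v) * (-1)) / (uL - v) ^ 2) * (η v - η uL)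
          + s v * deriv η v) v :=
      hsd.mul (hηd.sub_const (η uL))
    have hFd := h1.sub h2
    have heq : deriv A v * deriv η v -
        (((-deriv A v * (uL - v) - (A uL - A v) * (-1)) / (uL - v) ^ 2) * (η v - η uL)
          + s v * deriv η v)
        = (deriv A v - s v) * (deriv η v - (η v - η uL) / (v - uL)) := by
      rw [hs_def]
      field_simp
      ring
    rw [heq] at hFd
    exact hFd
  -- positivity of the derivative off uL
  have hpos : ∀ v : ℝ, v ≠ uL →
      0 < (deriv A v - s v) * (deriv η v - (η v - η uL) / (v - uL)) := by
    intro v hv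
    have h0' : v - uL ≠ 0 := sub_ne_zero.2 hv
    rcases hv.lt_or_gt with hvl | hvl
    · -- v < uL : both factors negative
      have hA_ineq : deriv A v < slope A v uL :=
        hA_conv.deriv_lt_slope (Set.mem_univ v) (Set.mem_univ uL) hvl (hA' v)
      have hη_ineq : deriv η v < slope η v uL :=
        hη_conv.deriv_lt_slope (Set.mem_univ v) (Set.mem_univ uL) hvl (hη' v)
      have hsv : slope A v uL = s v := by
        rw [hs_def, slope_def_field]
      have hsη : slope η v uL = (η v - η uL) / (v - uL) := by
        rw [slope_def_field, ← neg_sub (η v) (η uL), ← neg_sub v uL, neg_div_neg_eq]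
      rw [hsv] at hA_ineq
      rw [hsη] at hη_ineq
      exact mul_pos_of_neg_of_neg (sub_neg.2 hA_ineq) (sub_neg.2 hη_ineq)
    · -- uL < v : both factors positive
      have hA_ineq : slope A uL v < deriv A v :=
        hA_conv.slope_lt_deriv (Set.mem_univ uL) (Set.mem_univ v) hvl (hA' v)
      have hη_ineq : slope η uL v < deriv η v :=
        hη_conv.slope_lt_deriv (Set.mem_univ uL) (Set.mem_univ v) hvl (hη' v)
      have hsv : slope A uL v = s v := by rw [hs_slope]
      have hsη : slope η uL v = (η v - η uL) / (v - uL) := slope_def_field η uL v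
      rw [hsv] at hA_ineq
      rw [hsη] at hη_ineq
      exact mul_pos (sub_pos.2 hA_ineq) (sub_pos.2 hη_ineq)
  -- F is continuous at uL (within any set), via the slope limit
  have hs_tendsto : Filter.Tendsto s (nhdsWithin uL {uL}ᶜ) (nhds (deriv A uL)) := by
    rw [hs_slope]
    exact hasDerivAt_iff_tendsto_slope.1 (hA' uL).hasDerivAt
  have hF_tendsto : Filter.Tendsto F (nhdsWithin uL {uL}ᶜ) (nhds 0) := by
    have hq_cont : Filter.Tendsto (fun v => q v - q uL) (nhdsWithin uL {uL}ᶜ) (nhds 0) := by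
      have := ((hq uL).differentiableAt.continuousAt.tendsto).mono_left
        (nhdsWithin_le_nhds (s := {uL}ᶜ))
      simpa using this.sub_const (q uL)
    have hη_cont : Filter.Tendsto (fun v => η v - η uL) (nhdsWithin uL {uL}ᶜ) (nhds 0) := by
      have := ((hη' uL).continuousAt.tendsto).mono_left (nhdsWithin_le_nhds (s := {uL}ᶜ))
      simpa using this.sub_const (η uL)
    have := hq_cont.sub (hs_tendsto.mul hη_cont)
    simpa [hF_def] using this
  have hF_cwa : ∀ t : Set ℝ, ContinuousWithinAt F t uL := by
    intro t
    rw [← continuousWithinAt_diff_self]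
    unfold ContinuousWithinAt
    rw [hFa]
    exact hF_tendsto.mono_left (nhdsWithin_mono uL (by intro x hx; exact hx.2))
  have hF_contAt : ∀ v : ℝ, v ≠ uL → ContinuousAt F v := fun v hv =>
    (hderiv v hv).differentiableAt.continuousAt
  -- strict monotonicity on each side
  have hmono_left : StrictMonoOn F (Set.Iic uL) := by
    apply strictMonoOn_of_deriv_pos (convex_Iic uL)
    · intro v hv
      rcases eq_or_ne v uL with rfl | hv'
      · exact hF_cwa _
      · exact (hF_contAt v hv').continuousWithinAt
    · intro v hv
      rw [interior_Iic] at hv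
      have hv' : v ≠ uL := ne_of_lt hv
      rw [(hderiv v hv').deriv]
      exact hpos v hv'
  have hmono_right : StrictMonoOn F (Set.Ici uL) := by
    apply strictMonoOn_of_deriv_pos (convex_Ici uL)
    · intro v hv
      rcases eq_or_ne v uL with rfl | hv'
      · exact hF_cwa _
      · exact (hF_contAt v hv').continuousWithinAt
    · intro v hv
      rw [interior_Ici] at hv
      have hv' : v ≠ uL := ne_of_gt hv
      rw [(hderiv v hv').deriv]
      exact hpos v hv'
  have hFneg : ∀ v : ℝ, v < uL → F v < 0 := by
    intro v hv
    have := hmono_left (Set.mem_Iic.2 hv.le) (Set.mem_Iic.2 le_rfl) hv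
    rwa [hFa] at this
  have hFpos : ∀ v : ℝ, uL < v → 0 < F v := by
    intro v hv
    have := hmono_right (Set.mem_Ici.2 le_rfl) (Set.mem_Ici.2 hv.le) hv
    rwa [hFa] at this
  -- relate F uR to the entropy production when uR ≠ uL
  have hFuR : uR ≠ uL → F uR = q uR - q uL - σ * (η uR - η uL) := by
    intro hne
    have h0 : uL - uR ≠ 0 := sub_ne_zero.2 (Ne.symm hne)
    have hσ : s uR = σ := by
      rw [hs_def]
      simp only
      rw [hRH, mul_div_cancel_right₀ σ h0]
    rw [hF_def]
    simp only
    rw [hσ]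
  constructor
  · intro hent
    by_contra hcon
    push_neg at hcon
    have h1 : 0 < F uR := hFpos uR hcon
    rw [hFuR (ne_of_gt hcon)] at h1
    linarith
  · intro hle
    rcases hle.lt_or_eq with hlt | heq
    · have h1 : F uR < 0 := hFneg uR hlt
      rw [hFuR (ne_of_lt hlt)] at h1
      linarith
    · subst heq
      simp
end

section
/- Let A : ℝ → ℝ be three times continuously differentiable, η : ℝ → ℝ twice continuously differentiable, and let q : ℝ → ℝ satisfy q'(u) = A'(u)·η'(u) for all u. Let u₊, u₋, ū₊, ū₋ ∈ ℝ, set σ := σ(u₊,u₋) and κ := A(u₊) − σ·u₊. Then q(u₊;ū₊) − q(u₋;ū₋) − σ·(η(u₊|ū₊) − η(u₋|ū₋)) = ∫_{u₊}^{u₋} η''(u)·(A(u) − σ·u − κ) du − ∫_{ū₊}^{ū₋} η''(u)·(A(u) − σ·u − κ) du. -/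
/-!
The integrand `η''(u) (A(u) - σu - κ)` has the explicit primitive
`G(u) = η'(u) (A(u) - σu - κ) - q(u) + σ η(u)`, because `q' = A'η'` cancels the term
`η'(u) A'(u)` produced by the product rule. Both integrals therefore reduce to differences of `G`,
and the claim becomes an algebraic identity once one knows that `A(u) - σu` takes the same
value `κ` at `u₊` and `u₋` (the Rankine–Hugoniot condition).
-/

section EntropyPrimitive

variable {η η' η'' A A' q : ℝ → ℝ} (s κ : ℝ)

theorem hasDerivAt_entropy_primitive {u : ℝ} (hη : HasDerivAt η (η' u) u)
    (hη' : HasDerivAt η' (η'' u) u) (hA : HasDerivAt A (A' u) u)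
    (hq : HasDerivAt q (A' u * η' u) u) :
    HasDerivAt (fun u => η' u * (A u - s * u - κ) - q u + s * η u)
      (η'' u * (A u - s * u - κ)) u := by
  have hflux : HasDerivAt (fun u => A u - s * u - κ) (A' u - s) u := by
    simpa using (hA.sub ((hasDerivAt_id u).const_mul s)).sub_const κ
  exact (((hη'.mul hflux).sub hq).add (hη.const_mul s)).congr_deriv (by ring)

theorem integral_entropy_weight_eq (hη : ∀ u, HasDerivAt η (η' u) u)
    (hη' : ∀ u, HasDerivAt η' (η'' u) u) (hA : ∀ u, HasDerivAt A (A' u) u)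
    (hq : ∀ u, HasDerivAt q (A' u * η' u) u) (hη'' : Continuous η'') (a b : ℝ) :
    ∫ u in a..b, η'' u * (A u - s * u - κ)
      = (η' b * (A b - s * b - κ) - q b + s * η b)
        - (η' a * (A a - s * a - κ) - q a + s * η a) := by
  have hAc : Continuous A := continuous_iff_continuousAt.2 fun u => (hA u).continuousAt
  refine intervalIntegral.integral_eq_sub_of_hasDerivAt
    (fun u _ => hasDerivAt_entropy_primitive s κ (hη u) (hη' u) (hA u) (hq u)) ?_
  exact (hη''.mul ((hAc.sub (continuous_const.mul continuous_id)).sub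
    continuous_const)).intervalIntegrable _ _

end EntropyPrimitive

theorem sub_mul_eq_sub_mul_of_chord {A : ℝ → ℝ} {v w s : ℝ}
    (hs : v ≠ w → s = (A v - A w) / (v - w)) : A w - s * w = A v - s * v := by
  rcases eq_or_ne v w with rfl | hvw
  · rfl
  rw [hs hvw]
  field_simp [sub_ne_zero.2 hvw]
  ring

theorem entropy_dissipation_rewrite_general
    (A η q : ℝ → ℝ)
    (hA : ContDiff ℝ 3 A) (hη : ContDiff ℝ 2 η)
    (hq : ∀ u : ℝ, HasDerivAt q (deriv A u * deriv η u) u)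
    (σ : ℝ → ℝ → ℝ)
    (hσ_off : ∀ v w : ℝ, v ≠ w → σ v w = (A v - A w) / (v - w))
    (up um bup bum : ℝ) :
    ((q up - q bup - deriv η bup * (A up - A bup))
        - (q um - q bum - deriv η bum * (A um - A bum)))
      - σ up um * ((η up - η bup - deriv η bup * (up - bup))
        - (η um - η bum - deriv η bum * (um - bum)))
    = (∫ u in up..um, deriv (deriv η) u * (A u - σ up um * u - (A up - σ up um * up)))
      - ∫ u in bup..bum, deriv (deriv η) u * (A u - σ up um * u - (A up - σ up um * up)) := by
  have hη' : ContDiff ℝ 1 (deriv η) := by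
    simpa using ContDiff.iterate_deriv' 1 1 (f := η) (by exact_mod_cast hη)
  have hA_diff : Differentiable ℝ A := hA.differentiable (by norm_num)
  have hη_diff : Differentiable ℝ η := hη.differentiable (by norm_num)
  have hη'_diff : Differentiable ℝ (deriv η) := hη'.differentiable one_ne_zero
  have hprim := integral_entropy_weight_eq (σ up um) (A up - σ up um * up)
    (fun u => (hη_diff u).hasDerivAt) (fun u => (hη'_diff u).hasDerivAt)
    (fun u => (hA_diff u).hasDerivAt) hq (hη'.continuous_deriv le_rfl)
  have hRH : A um - σ up um * um = A up - σ up um * up :=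
    sub_mul_eq_sub_mul_of_chord (hσ_off up um)
  rw [hprim, hprim]
  linear_combination (deriv η bum - deriv η um) * hRH

/-- Rewriting of the relative entropy dissipation of a shock as a difference of
two integrals (structural lemma from Serre–Vasseur).  Here
`η(a|b) = η(a) − η(b) − η'(b)(a−b)` is the relative entropy,
`q(a;b) = q(a) − q(b) − η'(b)(A(a)−A(b))` the relative entropy flux,
`σ` the shock-speed function and `κ = A(u₊) − σ·u₊`. -/
theorem entropy_dissipation_rewrite
    (A η q : ℝ → ℝ)
    (hA : ContDiff ℝ 3 A) (hη : ContDiff ℝ 2 η)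
    (hq : ∀ u : ℝ, HasDerivAt q (deriv A u * deriv η u) u)
    (σ : ℝ → ℝ → ℝ)
    (hσ_off : ∀ v w : ℝ, v ≠ w → σ v w = (A v - A w) / (v - w))
    (hσ_diag : ∀ v : ℝ, σ v v = deriv A v)
    (up um bup bum : ℝ) :
    ((q up - q bup - deriv η bup * (A up - A bup))
        - (q um - q bum - deriv η bum * (A um - A bum)))
      - σ up um * ((η up - η bup - deriv η bup * (up - bup))
        - (η um - η bum - deriv η bum * (um - bum)))
    = (∫ u in up..um, deriv (deriv η) u * (A u - σ up um * u - (A up - σ up um * up)))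
      - ∫ u in bup..bum, deriv (deriv η) u * (A u - σ up um * u - (A up - σ up um * up)) :=
  entropy_dissipation_rewrite_general A η q hA hη hq σ hσ_off up um bup bum
end

section
/- Let A : ℝ → ℝ be three times continuously differentiable and convex, η : ℝ → ℝ twice continuously differentiable and convex, and let q : ℝ → ℝ satisfy q'(u) = A'(u)·η'(u) for all u. Let u₊, u₋, ū₊, ū₋ ∈ ℝ satisfy u₊ ≤ u₋ and ū₊ ≤ ū₋, and set σ := σ(u₊,u₋). Then q(u₊;ū₊) − q(u₋;ū₋) − σ·(η(u₊|ū₊) − η(u₋|ū₋)) ≤ 0. -/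
/-!
Write `E(b) := q(u₊;b) − σ η(u₊|b)`. Because the chord of slope `σ` through `u₊` also passes
through `u₋`, the map `u ↦ q(u;b) − σ η(u|b)` changes only by a constant between `u₊` and `u₋`,
so the claim becomes `E(u₋) − E(u₊) ≤ E(ū₋) − E(ū₊)`. Now
`E'(b) = η''(b) (A(b) − A(u₊) − σ (b − u₊))`, and convexity of `A` puts the graph of `A` below
the chord on `[u₊, u₋]` and above it outside, so `E` increases, decreases on `[u₊, u₋]`, and
increases again. For such a function, every increment `E(b) − E(a)` with `a ≤ b` is at least
the drop `E(u₋) − E(u₊)`.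
-/

open Set

section Valley

variable {α β : Type*} [LinearOrder α] [PartialOrder β] {f : α → β} {p r : α}

theorem le_of_monotoneOn_Iic_of_antitoneOn_Icc (h₁ : MonotoneOn f (Iic p))
    (h₂ : AntitoneOn f (Icc p r)) {a : α} (ha : a ≤ r) : f a ≤ f p := by
  rcases le_total a p with hap | hpa
  · exact h₁ hap self_mem_Iic hap
  · exact h₂ (left_mem_Icc.2 (hpa.trans ha)) ⟨hpa, ha⟩ hpa

theorem le_of_antitoneOn_Icc_of_monotoneOn_Ici (h₂ : AntitoneOn f (Icc p r))
    (h₃ : MonotoneOn f (Ici r)) {b : α} (hb : p ≤ b) : f r ≤ f b := by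
  rcases le_total b r with hbr | hrb
  · exact h₂ ⟨hb, hbr⟩ (right_mem_Icc.2 (hb.trans hbr)) hbr
  · exact h₃ self_mem_Ici hrb hrb

theorem sub_le_sub_of_monotoneOn_Iic_of_antitoneOn_Icc_of_monotoneOn_Ici
    [AddCommGroup β] [IsOrderedAddMonoid β] (h₁ : MonotoneOn f (Iic p))
    (h₂ : AntitoneOn f (Icc p r)) (h₃ : MonotoneOn f (Ici r)) (hpr : p ≤ r) {a b : α}
    (hab : a ≤ b) : f r - f p ≤ f b - f a := by
  have hdrop : f r - f p ≤ 0 :=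
    sub_nonpos.2 (h₂ (left_mem_Icc.2 hpr) (right_mem_Icc.2 hpr) hpr)
  rcases lt_or_ge r a with hra | har
  · exact hdrop.trans (sub_nonneg.2 (h₃ hra.le (hra.le.trans hab) hab))
  rcases lt_or_ge b p with hbp | hpb
  · exact hdrop.trans (sub_nonneg.2 (h₁ (hab.trans hbp.le) hbp.le hab))
  exact sub_le_sub (le_of_antitoneOn_Icc_of_monotoneOn_Ici h₂ h₃ hpb)
    (le_of_monotoneOn_Iic_of_antitoneOn_Icc h₁ h₂ har)

end Valley

theorem sub_le_sub_of_hasDerivAt_nonneg_off_Icc_nonpos_on_Ioo {f f' : ℝ → ℝ} {p r a b : ℝ}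
    (hf : ∀ x, HasDerivAt f (f' x) x) (h_out : ∀ x ∉ Icc p r, 0 ≤ f' x)
    (h_in : ∀ x ∈ Ioo p r, f' x ≤ 0) (hpr : p ≤ r) (hab : a ≤ b) :
    f r - f p ≤ f b - f a := by
  have hcont : ContinuousOn f univ := fun x _ ↦ (hf x).continuousAt.continuousWithinAt
  have hderiv (s : Set ℝ) (x : ℝ) : HasDerivWithinAt f (f' x) s x := (hf x).hasDerivWithinAt
  refine sub_le_sub_of_monotoneOn_Iic_of_antitoneOn_Icc_of_monotoneOn_Ici ?_ ?_ ?_ hpr hab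
  · refine monotoneOn_of_hasDerivWithinAt_nonneg (convex_Iic p) (hcont.mono (subset_univ _))
      (fun x _ ↦ hderiv _ x) fun x hx ↦ h_out x fun h ↦ ?_
    rw [interior_Iic] at hx
    exact (not_le.2 hx) h.1
  · refine antitoneOn_of_hasDerivWithinAt_nonpos (convex_Icc p r) (hcont.mono (subset_univ _))
      (fun x _ ↦ hderiv _ x) fun x hx ↦ h_in x ?_
    rwa [interior_Icc] at hx
  · refine monotoneOn_of_hasDerivWithinAt_nonneg (convex_Ici r) (hcont.mono (subset_univ _))
      (fun x _ ↦ hderiv _ x) fun x hx ↦ h_out x fun h ↦ ?_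
    rw [interior_Ici] at hx
    exact (not_le.2 hx) h.2

theorem slope_mul_sub (f : ℝ → ℝ) (v x : ℝ) : slope f v x * (x - v) = f x - f v := by
  simpa [mul_comm] using sub_smul_slope f v x

noncomputable def shockSpeed (f : ℝ → ℝ) (v w : ℝ) : ℝ :=
  if v = w then deriv f v else slope f v w

theorem shockSpeed_mul_sub (f : ℝ → ℝ) (v w : ℝ) : shockSpeed f v w * (w - v) = f w - f v := by
  unfold shockSpeed
  split_ifs with h
  · simp [h]
  · exact slope_mul_sub f v w

namespace ConvexOn

variable {f : ℝ → ℝ} (hf : ConvexOn ℝ univ f) {v w x : ℝ}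
include hf

theorem sub_le_shockSpeed_mul (hx : x ∈ Ioo v w) : f x - f v ≤ shockSpeed f v w * (x - v) := by
  have hvw : v ≠ w := (hx.1.trans hx.2).ne
  have hslope : slope f v x ≤ slope f v w :=
    hf.slope_mono (mem_univ v) ⟨mem_univ x, hx.1.ne'⟩ ⟨mem_univ w, hvw.symm⟩ hx.2.le
  rw [shockSpeed, if_neg hvw, ← slope_mul_sub]
  exact mul_le_mul_of_nonneg_right hslope (sub_nonneg.2 hx.1.le)

theorem slope_le_shockSpeed (hd : DifferentiableAt ℝ f v) (hvw : v ≤ w) (hx : x < v) :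
    slope f v x ≤ shockSpeed f v w := by
  unfold shockSpeed
  split_ifs with h
  · rw [slope_comm]
    exact hf.slope_le_deriv (mem_univ x) (mem_univ v) hx hd
  · exact hf.slope_mono (mem_univ v) ⟨mem_univ x, hx.ne⟩ ⟨mem_univ w, Ne.symm h⟩ (hx.le.trans hvw)

theorem shockSpeed_le_slope (hd : DifferentiableAt ℝ f v) (hvw : v ≤ w) (hx : w < x) :
    shockSpeed f v w ≤ slope f v x := by
  unfold shockSpeed
  split_ifs with h
  · exact hf.deriv_le_slope (mem_univ v) (mem_univ x) (h ▸ hx) hd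
  · exact hf.slope_mono (mem_univ v) ⟨mem_univ w, Ne.symm h⟩
      ⟨mem_univ x, (hvw.trans_lt hx).ne'⟩ hx.le

theorem shockSpeed_mul_le_sub (hd : DifferentiableAt ℝ f v) (hvw : v ≤ w) (hx : x ∉ Icc v w) :
    shockSpeed f v w * (x - v) ≤ f x - f v := by
  rw [← slope_mul_sub]
  rcases lt_or_ge x v with hxv | hvx
  · exact mul_le_mul_of_nonpos_right (hf.slope_le_shockSpeed hd hvw hxv) (sub_nonpos.2 hxv.le)
  · have hwx : w < x := lt_of_not_ge fun hxw ↦ hx ⟨hvx, hxw⟩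
    exact mul_le_mul_of_nonneg_right (hf.shockSpeed_le_slope hd hvw hwx) (sub_nonneg.2 hvx)

end ConvexOn

section RelativeEntropy

variable (η A q : ℝ → ℝ)

noncomputable def relEntropy (a b : ℝ) : ℝ := η a - η b - deriv η b * (a - b)

noncomputable def relEntropyFlux (a b : ℝ) : ℝ := q a - q b - deriv η b * (A a - A b)

@[simp] theorem relEntropy_self (a : ℝ) : relEntropy η a a = 0 := by simp [relEntropy]

@[simp] theorem relEntropyFlux_self (a : ℝ) : relEntropyFlux η A q a a = 0 := by
  simp [relEntropyFlux]

variable {η A q}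

theorem hasDerivAt_relEntropyFlux_sub_mul_relEntropy {u s b : ℝ}
    (hq : HasDerivAt q (deriv A b * deriv η b) b) (hA : DifferentiableAt ℝ A b)
    (hη : DifferentiableAt ℝ η b) (hη' : DifferentiableAt ℝ (deriv η) b) :
    HasDerivAt (fun b ↦ relEntropyFlux η A q u b - s * relEntropy η u b)
      (deriv (deriv η) b * (A b - A u - s * (b - u))) b := by
  have hflux := (hq.const_sub (q u)).sub (hη'.hasDerivAt.mul (hA.hasDerivAt.const_sub (A u)))
  have hentropy := (hη.hasDerivAt.const_sub (η u)).sub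
    (hη'.hasDerivAt.mul ((hasDerivAt_id b).const_sub u))
  exact (hflux.sub (hentropy.const_mul s)).congr_deriv (by simp only [id]; ring)

theorem relEntropyFlux_sub_mul_relEntropy_eq_add {u v s : ℝ} (h : A v - A u = s * (v - u))
    (b : ℝ) :
    relEntropyFlux η A q v b - s * relEntropy η v b
      = relEntropyFlux η A q u b - s * relEntropy η u b
        + (relEntropyFlux η A q v u - s * relEntropy η v u) := by
  unfold relEntropyFlux relEntropy
  linear_combination (deriv η u - deriv η b) * h

end RelativeEntropy

/-- For a convex `C³` flux `A`, a convex `C²` entropy `η` and entropy flux `q`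
with `q' = A'·η'`, if `u₊ ≤ u₋` and `ū₊ ≤ ū₋` then the relative entropy dissipation of the
shock is nonpositive:
`q(u₊;ū₊) − q(u₋;ū₋) − σ(u₊,u₋)(η(u₊|ū₊) − η(u₋|ū₋)) ≤ 0`. -/
theorem entropy_dissipation_nonpos
    (A η q : ℝ → ℝ)
    (hA : ContDiff ℝ 3 A) (hA_conv : ConvexOn ℝ Set.univ A)
    (hη : ContDiff ℝ 2 η) (hη_conv : ConvexOn ℝ Set.univ η)
    (hq : ∀ u : ℝ, HasDerivAt q (deriv A u * deriv η u) u)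
    (σ : ℝ → ℝ → ℝ)
    (hσ_off : ∀ v w : ℝ, v ≠ w → σ v w = (A v - A w) / (v - w))
    (hσ_diag : ∀ v : ℝ, σ v v = deriv A v)
    (up um bup bum : ℝ) (h1 : up ≤ um) (h2 : bup ≤ bum) :
    ((q up - q bup - deriv η bup * (A up - A bup))
        - (q um - q bum - deriv η bum * (A um - A bum)))
      - σ up um * ((η up - η bup - deriv η bup * (up - bup))
        - (η um - η bum - deriv η bum * (um - bum))) ≤ 0 := by
  have hAd : Differentiable ℝ A := hA.differentiable (by norm_num)
  have hηd : Differentiable ℝ η := hη.differentiable (by norm_num)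
  have hη'' (x : ℝ) : 0 ≤ deriv (deriv η) x :=
    (monotoneOn_univ.1 (hη_conv.monotoneOn_deriv fun y _ ↦ hηd y)).deriv_nonneg
  have hσ : σ up um = shockSpeed A up um := by
    unfold shockSpeed
    split_ifs with h
    · subst h
      exact hσ_diag up
    · rw [hσ_off up um h, slope_comm, slope_def_field]
  set E := fun b ↦ relEntropyFlux η A q up b - σ up um * relEntropy η up b
  have hE (b : ℝ) : HasDerivAt E (deriv (deriv η) b * (A b - A up - σ up um * (b - up))) b :=
    hasDerivAt_relEntropyFlux_sub_mul_relEntropy (hq b) (hAd b) (hηd b)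
      (hη.differentiable_deriv_two b)
  have hvalley : E um - E up ≤ E bum - E bup := by
    refine sub_le_sub_of_hasDerivAt_nonneg_off_Icc_nonpos_on_Ioo hE (fun x hx ↦ ?_)
      (fun x hx ↦ ?_) h1 h2
    · exact mul_nonneg (hη'' x)
        (sub_nonneg.2 (hσ ▸ hA_conv.shockSpeed_mul_le_sub (hAd up) h1 hx))
    · exact mul_nonpos_of_nonneg_of_nonpos (hη'' x)
        (sub_nonpos.2 (hσ ▸ hA_conv.sub_le_shockSpeed_mul hx))
  have hchord : A um - A up = σ up um * (um - up) := hσ ▸ (shockSpeed_mul_sub A up um).symm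
  have h_bum := relEntropyFlux_sub_mul_relEntropy_eq_add (q := q) (η := η) hchord bum
  have h_um := relEntropyFlux_sub_mul_relEntropy_eq_add (q := q) (η := η) hchord um
  simp only [E, relEntropyFlux_self, relEntropy_self] at hvalley h_um
  change relEntropyFlux η A q up bup - relEntropyFlux η A q um bum
    - σ up um * (relEntropy η up bup - relEntropy η um bum) ≤ 0
  linarith
end

section
/- Let δ > 0 and let a, u₊, u₋ ∈ ℝ satisfy a ≤ u₋, u₋ − a ≤ δ/2, and u₋ − u₊ ≥ δ/2. Then ∫_a^{u₋} (u − u₊)(u − u₋) du ≤ −(δ/12)·(u₋ − a)². -/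
theorem integral_sub_mul_sub (a b p q : ℝ) :
    ∫ u in a..b, (u - p) * (u - q) =
      (b - q) ^ 2 * ((b - q) / 3 + (q - p) / 2) - (a - q) ^ 2 * ((a - q) / 3 + (q - p) / 2) := by
  have hcont : Continuous fun u : ℝ => (u - p) * (u - q) := by fun_prop
  -- an antiderivative expanded around the root `q`, so that it vanishes there
  refine intervalIntegral.integral_eq_sub_of_hasDerivAt
    (f := fun x => (x - q) ^ 2 * ((x - q) / 3 + (q - p) / 2)) (fun x _ => ?_)
    (hcont.intervalIntegrable a b)
  have hx : HasDerivAt (fun x => x - q) 1 x := (hasDerivAt_id' x).sub_const q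
  exact ((hx.fun_pow 2).fun_mul ((hx.div_const 3).add_const ((q - p) / 2))).congr_deriv
    (by push_cast; ring)

theorem parabola_integral_upper_bound_general
    (δ a up um : ℝ)
    (h2 : um - a ≤ δ / 2) (h3 : δ / 2 ≤ um - up) :
    (∫ u in a..um, (u - up) * (u - um)) ≤ -(δ / 12) * (um - a) ^ 2 := by
  have hcoeff : (um - a) / 3 - (um - up) / 2 ≤ -(δ / 12) := by linarith
  calc (∫ u in a..um, (u - up) * (u - um))
      = (um - a) ^ 2 * ((um - a) / 3 - (um - up) / 2) := by rw [integral_sub_mul_sub]; ring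
    _ ≤ (um - a) ^ 2 * -(δ / 12) := mul_le_mul_of_nonneg_left hcoeff (sq_nonneg _)
    _ = -(δ / 12) * (um - a) ^ 2 := mul_comm _ _

/-- If `a ≤ u₋`, `u₋ − a ≤ δ/2` and `u₋ − u₊ ≥ δ/2`, then
`∫_a^{u₋} (u − u₊)(u − u₋) du ≤ −(δ/12)(u₋ − a)²`. -/
theorem parabola_integral_upper_bound
    (δ a up um : ℝ) (hδ : 0 < δ)
    (h1 : a ≤ um) (h2 : um - a ≤ δ / 2) (h3 : δ / 2 ≤ um - up) :
    (∫ u in a..um, (u - up) * (u - um)) ≤ -(δ / 12) * (um - a) ^ 2 :=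
  parabola_integral_upper_bound_general δ a up um h2 h3
end

section
/- Fix δ > 0 and B > 0. Let A : ℝ → ℝ be three times continuously differentiable and strictly convex, let η : ℝ → ℝ be three times continuously differentiable with η'' > 0 everywhere, and let q : ℝ → ℝ satisfy q'(u) = A'(u)·η'(u) for all u. Then there exists a constant c > 0 (depending on δ, B, A and η) such that for all u₊, u₋, ū₊, ū₋ ∈ ℝ with u₊ ≤ u₋, ū₋ − ū₊ ≥ δ, and |u₊|, |u₋|, |ū₊|, |ū₋| ≤ B, one has q(u₊;ū₊) − q(u₋;ū₋) − σ(u₊,u₋)·(η(u₊|ū₊) − η(u₋|ū₋)) ≤ −c·((u₊ − ū₊)² + (u₋ − ū₋)²). -/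
open Set intervalIntegral

noncomputable def NEDsig (A : ℝ → ℝ) (x y : ℝ) : ℝ := ∫ t in (0:ℝ)..1, deriv A (x + t*(y-x))

lemma NEDsig_self (A : ℝ → ℝ) (x : ℝ) : NEDsig A x x = deriv A x := by
  simp [NEDsig]

lemma NEDreg {A : ℝ → ℝ} (hA : ContDiff ℝ 3 A) :
    Differentiable ℝ A ∧ Continuous (deriv A) := by
  have h1 : ContDiff ℝ 1 A := hA.of_le (by norm_num)
  rw [contDiff_one_iff_deriv] at h1
  exact h1

lemma NEDreg2 {η : ℝ → ℝ} (hη : ContDiff ℝ 3 η) :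
    Differentiable ℝ η ∧ Differentiable ℝ (deriv η) ∧ Continuous (deriv (deriv η)) := by
  have h2 : ContDiff ℝ (1+1) η := hη.of_le (by norm_num)
  rw [contDiff_succ_iff_deriv] at h2
  have h3 := h2.2.2
  rw [contDiff_one_iff_deriv] at h3
  exact ⟨h2.1, h3.1, h3.2⟩

lemma NEDsig_cont {A : ℝ → ℝ} (hA' : Continuous (deriv A)) :
    Continuous fun p : ℝ × ℝ => NEDsig A p.1 p.2 := by
  apply intervalIntegral.continuous_parametric_intervalIntegral_of_continuous'
  apply hA'.comp
  fun_prop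

lemma NEDsig_RH {A : ℝ → ℝ} (hd : Differentiable ℝ A) (hA' : Continuous (deriv A))
    (x y : ℝ) : NEDsig A x y * (y - x) = A y - A x := by
  have key : ∫ t in (0:ℝ)..1, (deriv A (x + t*(y-x)) * (y-x)) = A y - A x := by
    have := intervalIntegral.integral_eq_sub_of_hasDerivAt
      (f := fun t => A (x + t*(y-x))) (f' := fun t => deriv A (x + t*(y-x)) * (y-x))
      (a := 0) (b := 1) ?_ ?_
    · rw [this]; norm_num
    · intro t _
      have h1 : HasDerivAt (fun t : ℝ => x + t*(y-x)) (y-x) t := by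
        simpa [mul_comm] using ((hasDerivAt_id t).const_mul (y-x)).const_add x
      exact ((hd _).hasDerivAt.comp t h1)
    · exact ((hA'.comp (by fun_prop)).mul continuous_const).intervalIntegrable 0 1
  rw [NEDsig, ← intervalIntegral.integral_mul_const, key]

lemma NEDsig_eq {A : ℝ → ℝ} (hd : Differentiable ℝ A) (hA' : Continuous (deriv A))
    {x y : ℝ} (h : x ≠ y) : NEDsig A x y = (A y - A x) / (y - x) := by
  have := NEDsig_RH hd hA' x y
  field_simp [sub_ne_zero.mpr (Ne.symm h)]
  linarith [this]

lemma NEDsig_bounds {A : ℝ → ℝ} (hd : Differentiable ℝ A) (hA' : Continuous (deriv A))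
    (hc : StrictConvexOn ℝ Set.univ A) {x y : ℝ} (h : x < y) :
    deriv A x < NEDsig A x y ∧ NEDsig A x y < deriv A y := by
  rw [NEDsig_eq hd hA' h.ne]
  have h1 := hc.deriv_lt_slope (mem_univ x) (mem_univ y) h (hd x)
  have h2 := hc.slope_lt_deriv (mem_univ x) (mem_univ y) h (hd y)
  rw [slope_def_field] at h1 h2
  exact ⟨h1, h2⟩

lemma NEDkey {A η q : ℝ → ℝ}
    (hdA : Differentiable ℝ A) (hA' : Continuous (deriv A))
    (hdη : Differentiable ℝ η) (hdη' : Differentiable ℝ (deriv η))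
    (hη'' : Continuous (deriv (deriv η)))
    (hq : ∀ u : ℝ, HasDerivAt q (deriv A u * deriv η u) u)
    (s : ℝ) (u x : ℝ) :
    q u - q x - deriv η x * (A u - A x) - s * (η u - η x - deriv η x * (u - x))
      = ∫ v in u..x, -(deriv (deriv η) v * (A u - A v - s * (u - v))) := by
  have hder : ∀ v : ℝ, HasDerivAt
      (fun v => q u - q v - deriv η v * (A u - A v) - s * (η u - η v - deriv η v * (u - v)))
      (-(deriv (deriv η) v * (A u - A v - s * (u - v)))) v := by
    intro v
    have h1 : HasDerivAt (fun v => q u - q v) (-(deriv A v * deriv η v)) v :=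
      (hq v).const_sub (q u)
    have h2 : HasDerivAt (fun v => deriv η v * (A u - A v))
        (deriv (deriv η) v * (A u - A v) + deriv η v * (-(deriv A v))) v :=
      ((hdη' v).hasDerivAt).mul (((hdA v).hasDerivAt).const_sub (A u))
    have h3 : HasDerivAt (fun v => η u - η v - deriv η v * (u - v))
        (-(deriv η v) - (deriv (deriv η) v * (u - v) + deriv η v * (-1))) v := by
      exact (((hdη v).hasDerivAt).const_sub (η u)).sub
        (((hdη' v).hasDerivAt).mul (((hasDerivAt_id v).const_sub u)))
    have := (h1.sub h2).sub (h3.const_mul s)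
    exact this.congr_deriv (by ring)
  have hint : IntervalIntegrable
      (fun v => -(deriv (deriv η) v * (A u - A v - s * (u - v)))) MeasureTheory.volume u x := by
    apply Continuous.intervalIntegrable
    have : Continuous A := hdA.continuous
    fun_prop
  have := intervalIntegral.integral_eq_sub_of_hasDerivAt (fun v _ => hder v) hint
  rw [this]
  ring

lemma NEDF_eq {A η q : ℝ → ℝ}
    (hdA : Differentiable ℝ A) (hA' : Continuous (deriv A))
    (hdη : Differentiable ℝ η) (hdη' : Differentiable ℝ (deriv η))
    (hη'' : Continuous (deriv (deriv η)))
    (hq : ∀ u : ℝ, HasDerivAt q (deriv A u * deriv η u) u)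
    {s p r : ℝ} (hs : s * (r - p) = A r - A p) (a b : ℝ) :
    ((q p - q a - deriv η a * (A p - A a)) - (q r - q b - deriv η b * (A r - A b)))
      - s * ((η p - η a - deriv η a * (p - a)) - (η r - η b - deriv η b * (r - b)))
      = (∫ v in a..p, deriv (deriv η) v * (A p - A v - s * (p - v)))
        + ∫ v in r..b, deriv (deriv η) v * (A p - A v - s * (p - v)) := by
  have k1 := NEDkey hdA hA' hdη hdη' hη'' hq s p a
  have k2 := NEDkey hdA hA' hdη hdη' hη'' hq s r b
  have e2 : ∀ v : ℝ, A r - A v - s * (r - v) = A p - A v - s * (p - v) := by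
    intro v; nlinarith [hs]
  simp only [e2] at k2
  have r1 : (∫ v in p..a, -(deriv (deriv η) v * (A p - A v - s * (p - v))))
      = ∫ v in a..p, deriv (deriv η) v * (A p - A v - s * (p - v)) := by
    rw [intervalIntegral.integral_neg, intervalIntegral.integral_symm a p, neg_neg]
  have r2 : (∫ v in r..b, -(deriv (deriv η) v * (A p - A v - s * (p - v))))
      = -∫ v in r..b, deriv (deriv η) v * (A p - A v - s * (p - v)) := by
    rw [intervalIntegral.integral_neg]
  rw [r1] at k1; rw [r2] at k2
  linarith [k1, k2]

section
variable {A η : ℝ → ℝ}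
  (hdA : Differentiable ℝ A) (hc : StrictConvexOn ℝ Set.univ A)
  (hη'' : ∀ x : ℝ, 0 < deriv (deriv η) x)
  {s p r : ℝ} (hpr : p ≤ r)
  (hs : s * (r - p) = A r - A p)
  (hsl : deriv A p ≤ s) (hsr : s ≤ deriv A r)

include hdA hc in
lemma NEDchord1 {x y : ℝ} (h : x < y) : deriv A x * (y - x) < A y - A x := by
  have := hc.deriv_lt_slope (Set.mem_univ x) (Set.mem_univ y) h (hdA x)
  rw [slope_def_field] at this
  have hyx : 0 < y - x := sub_pos.2 h
  calc deriv A x * (y-x) < (A y - A x)/(y-x) * (y-x) := by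
        exact mul_lt_mul_of_pos_right this hyx
    _ = A y - A x := by field_simp

include hdA hc in
lemma NEDchord2 {x y : ℝ} (h : x < y) : A y - A x < deriv A y * (y - x) := by
  have := hc.slope_lt_deriv (Set.mem_univ x) (Set.mem_univ y) h (hdA y)
  rw [slope_def_field] at this
  have hyx : 0 < y - x := sub_pos.2 h
  calc A y - A x = (A y - A x)/(y-x) * (y-x) := by field_simp
    _ < deriv A y * (y-x) := mul_lt_mul_of_pos_right this hyx

include hdA hc in
lemma NEDchord1' {x y : ℝ} (h : x ≤ y) : deriv A x * (y - x) ≤ A y - A x := by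
  rcases eq_or_lt_of_le h with h | h
  · subst h; simp
  · exact (NEDchord1 hdA hc h).le

include hdA hc in
lemma NEDchord2' {x y : ℝ} (h : x ≤ y) : A y - A x ≤ deriv A y * (y - x) := by
  rcases eq_or_lt_of_le h with h | h
  · subst h; simp
  · exact (NEDchord2 hdA hc h).le

include hdA hc hη'' hsl in
lemma NEDh_left {v : ℝ} (hv : v < p) :
    deriv (deriv η) v * (A p - A v - s * (p - v)) < 0 := by
  have h1 : A p - A v < deriv A p * (p - v) := NEDchord2 hdA hc hv
  have : A p - A v - s * (p - v) < 0 := by nlinarith [sub_pos.2 hv]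
  exact mul_neg_of_pos_of_neg (hη'' v) this

include hdA hc hη'' hsr hs in
lemma NEDh_right {v : ℝ} (hv : r < v) :
    deriv (deriv η) v * (A p - A v - s * (p - v)) < 0 := by
  have h1 : deriv A r * (v - r) < A v - A r := NEDchord1 hdA hc hv
  have : A p - A v - s * (p - v) < 0 := by nlinarith [sub_pos.2 hv]
  exact mul_neg_of_pos_of_neg (hη'' v) this

include hdA hc hη'' hs in
lemma NEDh_mid {v : ℝ} (hv1 : p < v) (hv2 : v < r) :
    0 < deriv (deriv η) v * (A p - A v - s * (p - v)) := by
  have h1 : A v - A p < deriv A v * (v - p) := NEDchord2 hdA hc hv1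
  have h2 : deriv A v * (r - v) < A r - A v := NEDchord1 hdA hc hv2
  have hm : (A v - A p) * (r - v) < (A r - A v) * (v - p) := by
    nlinarith [sub_pos.2 hv1, sub_pos.2 hv2]
  have : 0 < A p - A v - s * (p - v) := by
    nlinarith [sub_pos.2 hv1, sub_pos.2 hv2, sub_pos.2 (hv1.trans hv2)]
  exact mul_pos (hη'' v) this

include hdA hc hη'' hsl in
lemma NEDh_left' {v : ℝ} (hv : v ≤ p) :
    deriv (deriv η) v * (A p - A v - s * (p - v)) ≤ 0 := by
  rcases eq_or_lt_of_le hv with h | h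
  · subst h; simp
  · exact (NEDh_left hdA hc hη'' hsl h).le

include hdA hc hη'' hsr hs in
lemma NEDh_right' {v : ℝ} (hv : r ≤ v) :
    deriv (deriv η) v * (A p - A v - s * (p - v)) ≤ 0 := by
  rcases eq_or_lt_of_le hv with h | h
  · subst h
    have : A p - A r - s * (p - r) = 0 := by linarith [hs]
    rw [this, mul_zero]
  · exact (NEDh_right hdA hc hη'' hs hsr h).le

include hdA hc hη'' hs in
lemma NEDh_mid' {v : ℝ} (hv1 : p ≤ v) (hv2 : v ≤ r) :
    0 ≤ deriv (deriv η) v * (A p - A v - s * (p - v)) := by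
  rcases eq_or_lt_of_le hv1 with h | h
  · subst h; simp
  rcases eq_or_lt_of_le hv2 with h2 | h2
  · subst h2
    have : A p - A v - s * (p - v) = 0 := by linarith [hs]
    rw [this, mul_zero]
  · exact (NEDh_mid hdA hc hη'' hs h h2).le
end

lemma NEDpolyA (c d : ℝ) : ∫ v in c..d, (d - v) = (d - c)^2 / 2 := by
  have hder : ∀ v : ℝ, HasDerivAt (fun v : ℝ => -(d - v)^2/2) (d - v) v := by
    intro v
    have h1 : HasDerivAt (fun v : ℝ => d - v) (-1) v := by
      simpa using (hasDerivAt_id v).const_sub d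
    have h2 := ((h1.pow 2).neg).div_const 2
    exact h2.congr_deriv (by push_cast; ring)
  have := intervalIntegral.integral_eq_sub_of_hasDerivAt (f := fun v : ℝ => -(d - v)^2/2)
    (f' := fun v => d - v) (a := c) (b := d) (fun v _ => hder v)
    ((by fun_prop : Continuous fun v : ℝ => d - v).intervalIntegrable c d)
  rw [this]; ring

lemma NEDpolyB (c d : ℝ) : ∫ v in c..d, (v - c) = (d - c)^2 / 2 := by
  have hder : ∀ v : ℝ, HasDerivAt (fun v : ℝ => (v - c)^2/2) (v - c) v := by
    intro v
    have h1 : HasDerivAt (fun v : ℝ => v - c) 1 v := by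
      simpa using (hasDerivAt_id v).sub_const c
    have h2 := (h1.pow 2).div_const 2
    exact h2.congr_deriv (by push_cast; ring)
  have := intervalIntegral.integral_eq_sub_of_hasDerivAt (f := fun v : ℝ => (v - c)^2/2)
    (f' := fun v => v - c) (a := c) (b := d) (fun v _ => hder v)
    ((by fun_prop : Continuous fun v : ℝ => v - c).intervalIntegrable c d)
  rw [this]; ring

set_option maxHeartbeats 2000000 in
/-- Negativity of the entropy dissipation (structural lemma): for a strictly
convex `C³` flux `A`, an entropy `η ∈ C³` with `η'' > 0`, and entropy flux `q` with
`q' = A'·η'`, there is `c > 0` (depending on `δ`, `B`, `A`, `η`) such that for all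
`u₊ ≤ u₋`, `ū₋ − ū₊ ≥ δ`, all in `[−B,B]`:
`q(u₊;ū₊) − q(u₋;ū₋) − σ(u₊,u₋)(η(u₊|ū₊) − η(u₋|ū₋)) ≤ −c((u₊−ū₊)² + (u₋−ū₋)²)`. -/
theorem negative_entropy_dissipation
    (δ B : ℝ) (hδ : 0 < δ) (hB : 0 < B)
    (A η q : ℝ → ℝ)
    (hA : ContDiff ℝ 3 A) (hA_conv : StrictConvexOn ℝ Set.univ A)
    (hη : ContDiff ℝ 3 η) (hη'' : ∀ x : ℝ, 0 < deriv (deriv η) x)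
    (hq : ∀ u : ℝ, HasDerivAt q (deriv A u * deriv η u) u)
    (σ : ℝ → ℝ → ℝ)
    (hσ_off : ∀ v w : ℝ, v ≠ w → σ v w = (A v - A w) / (v - w))
    (hσ_diag : ∀ v : ℝ, σ v v = deriv A v) :
    ∃ c > 0, ∀ up um bup bum : ℝ,
      up ≤ um → δ ≤ bum - bup →
      |up| ≤ B → |um| ≤ B → |bup| ≤ B → |bum| ≤ B →
      ((q up - q bup - deriv η bup * (A up - A bup))
          - (q um - q bum - deriv η bum * (A um - A bum)))
        - σ up um * ((η up - η bup - deriv η bup * (up - bup))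
          - (η um - η bum - deriv η bum * (um - bum)))
      ≤ -c * ((up - bup) ^ 2 + (um - bum) ^ 2) := by
  obtain ⟨hdA, hA'⟩ := NEDreg hA
  obtain ⟨hdη, hdη', hη2⟩ := NEDreg2 hη
  rcases lt_or_ge (2*B) δ with hδB | hδB
  · refine ⟨1, one_pos, fun up um bup bum h1 h2 h3 h4 h5 h6 => ?_⟩
    have k5 := abs_le.mp h5; have k6 := abs_le.mp h6
    linarith
  -- the constant α : min of η'' on the box
  have hBB : -B ≤ B := by linarith
  obtain ⟨x₀, hx₀mem, hx₀min⟩ := isCompact_Icc.exists_isMinOn ⟨-B, left_mem_Icc.mpr hBB⟩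
      hη2.continuousOn
  set α := deriv (deriv η) x₀ with hαdef
  have hα : 0 < α := hη'' x₀
  have hαle : ∀ v ∈ Set.Icc (-B) B, α ≤ deriv (deriv η) v :=
    fun v hv => isMinOn_iff.mp hx₀min v hv
  -- the constant γ : convexity gap for chords over intervals of length ≥ δ/2
  set S : Set (ℝ×ℝ) := (Set.Icc (-B) B ×ˢ Set.Icc (-B) B) ∩ {z | δ/2 ≤ z.2 - z.1} with hSdef
  have hScomp : IsCompact S := (isCompact_Icc.prod isCompact_Icc).inter_right
    (isClosed_le continuous_const (continuous_snd.sub continuous_fst))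
  have hSne : S.Nonempty := by
    refine ⟨(-B, -B + δ/2), ⟨left_mem_Icc.mpr hBB, Set.mem_Icc.mpr ⟨by linarith, by linarith⟩⟩, ?_⟩
    show δ/2 ≤ (-B + δ/2) - (-B)
    linarith
  set φ : ℝ×ℝ → ℝ :=
    fun z => min (NEDsig A z.1 z.2 - deriv A z.1) (deriv A z.2 - NEDsig A z.1 z.2) with hφdef
  have hφcont : Continuous φ := Continuous.min
    ((NEDsig_cont hA').sub (hA'.comp continuous_fst))
    ((hA'.comp continuous_snd).sub (NEDsig_cont hA'))
  obtain ⟨z₀, hz₀S, hz₀min⟩ := hScomp.exists_isMinOn hSne hφcont.continuousOn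
  set γ := φ z₀ with hγdef
  have hz₀lt : z₀.1 < z₀.2 := by
    have h2 : δ/2 ≤ z₀.2 - z₀.1 := hz₀S.2
    linarith
  have hγ : 0 < γ := by
    obtain ⟨hb1, hb2⟩ := NEDsig_bounds hdA hA' hA_conv hz₀lt
    exact lt_min (by linarith) (by linarith)
  have hγle : ∀ x y : ℝ, x ∈ Set.Icc (-B) B → y ∈ Set.Icc (-B) B → δ/2 ≤ y - x →
      deriv A x + γ ≤ NEDsig A x y ∧ NEDsig A x y + γ ≤ deriv A y := by
    intro x y hx hy hxy
    have hm : (x,y) ∈ S := ⟨⟨hx, hy⟩, hxy⟩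
    have hmin := isMinOn_iff.mp hz₀min (x,y) hm
    have h1 := le_trans hmin (min_le_left _ _)
    have h2 := le_trans hmin (min_le_right _ _)
    exact ⟨by linarith, by linarith⟩
  -- the constant ε : modulus of continuity of A' for γ/2
  have hUC := isCompact_Icc.uniformContinuousOn_of_continuous
    (f := deriv A) (s := Set.Icc (-B) B) hA'.continuousOn
  rw [Metric.uniformContinuousOn_iff] at hUC
  obtain ⟨ε', hε'pos, hUC⟩ := hUC (γ/2) (by positivity)
  set ε := min (ε'/2) (δ/8) with hεdef
  have hεpos : 0 < ε := lt_min (by positivity) (by positivity)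
  have hεδ : ε ≤ δ/8 := min_le_right _ _
  have hεε' : ε ≤ ε'/2 := min_le_left _ _
  -- the dissipation functional
  set F : (ℝ×ℝ)×(ℝ×ℝ) → ℝ := fun x =>
    ((q x.1.1 - q x.2.1 - deriv η x.2.1 * (A x.1.1 - A x.2.1))
       - (q x.1.2 - q x.2.2 - deriv η x.2.2 * (A x.1.2 - A x.2.2)))
     - NEDsig A x.1.1 x.1.2 * ((η x.1.1 - η x.2.1 - deriv η x.2.1 * (x.1.1 - x.2.1))
       - (η x.1.2 - η x.2.2 - deriv η x.2.2 * (x.1.2 - x.2.2))) with hFdef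
  have hqc : Continuous q := Differentiable.continuous (fun x => (hq x).differentiableAt)
  have hsigc := NEDsig_cont hA'
  have hFcont : Continuous F := by
    have h1 : Continuous fun x : (ℝ×ℝ)×(ℝ×ℝ) => NEDsig A x.1.1 x.1.2 :=
      hsigc.comp continuous_fst
    have hAc : Continuous A := hdA.continuous
    have hηc : Continuous η := hdη.continuous
    have hη'c : Continuous (deriv η) := hdη'.continuous
    rw [hFdef]
    fun_prop
  have hFeq : ∀ p r a b : ℝ, F ((p,r),(a,b)) =
      (∫ v in a..p, deriv (deriv η) v * (A p - A v - NEDsig A p r * (p - v)))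
        + ∫ v in r..b, deriv (deriv η) v * (A p - A v - NEDsig A p r * (p - v)) :=
    fun p r a b => NEDF_eq hdA hA' hdη hdη' hη2 hq (NEDsig_RH hdA hA' p r) a b
  -- Claim 1 : strict negativity away from the contact point
  have hFneg : ∀ p r a b : ℝ, p ≤ r → a < b → (a ≠ p ∨ b ≠ r) → F ((p,r),(a,b)) < 0 := by
    intro p r a b hpr hab hne
    rw [hFeq p r a b]
    set s := NEDsig A p r with hsdef
    have hs : s * (r - p) = A r - A p := NEDsig_RH hdA hA' p r
    have hslr : deriv A p ≤ s ∧ s ≤ deriv A r := by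
      rcases eq_or_lt_of_le hpr with h | h
      · rw [hsdef, ← h, NEDsig_self]; exact ⟨le_refl _, le_refl _⟩
      · obtain ⟨u1,u2⟩ := NEDsig_bounds hdA hA' hA_conv h; exact ⟨u1.le, u2.le⟩
    obtain ⟨hsl, hsr⟩ := hslr
    set h : ℝ → ℝ := fun v => deriv (deriv η) v * (A p - A v - s * (p - v)) with hhdef
    have hhc : Continuous h := by
      have hAc : Continuous A := hdA.continuous
      rw [hhdef]; fun_prop
    have hint : ∀ c d : ℝ, IntervalIntegrable h MeasureTheory.volume c d :=
      fun c d => hhc.intervalIntegrable c d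
    have hL : ∀ v, v < p → h v < 0 := fun v hv => NEDh_left hdA hA_conv hη'' hsl hv
    have hR : ∀ v, r < v → h v < 0 := fun v hv => NEDh_right hdA hA_conv hη'' hs hsr hv
    have hM : ∀ v, p < v → v < r → 0 < h v := fun v h1 h2 => NEDh_mid hdA hA_conv hη'' hs h1 h2
    have hM' : ∀ v, p ≤ v → v ≤ r → 0 ≤ h v := fun v h1 h2 => NEDh_mid' hdA hA_conv hη'' hs h1 h2
    have hadd1 : (∫ v in a..p, h v) + (∫ v in p..b, h v) = ∫ v in a..b, h v :=
      intervalIntegral.integral_add_adjacent_intervals (hint a p) (hint p b)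
    have hadd2 : (∫ v in p..r, h v) + (∫ v in r..b, h v) = ∫ v in p..b, h v :=
      intervalIntegral.integral_add_adjacent_intervals (hint p r) (hint r b)
    have hmid : 0 ≤ ∫ v in p..r, h v :=
      intervalIntegral.integral_nonneg hpr (fun v hv => hM' v hv.1 hv.2)
    rcases lt_or_ge r a with hra | har
    · -- J entirely to the right of I
      have hout : 0 < ∫ v in a..b, (-(h v)) := by
        apply intervalIntegral_pos_of_pos_on ((hhc.neg).intervalIntegrable a b) ?_ hab
        intro v hv
        exact neg_pos.mpr (hR v (lt_trans hra hv.1))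
      rw [intervalIntegral.integral_neg] at hout
      linarith
    rcases lt_or_ge b p with hbp | hpb
    · -- J entirely to the left of I
      have hout : 0 < ∫ v in a..b, (-(h v)) := by
        apply intervalIntegral_pos_of_pos_on ((hhc.neg).intervalIntegrable a b) ?_ hab
        intro v hv
        exact neg_pos.mpr (hL v (lt_trans hv.2 hbp))
      rw [intervalIntegral.integral_neg] at hout
      linarith
    · -- overlapping case : a ≤ r and p ≤ b
      have hT1 : (∫ v in a..p, h v) ≤ 0 ∧ (a ≠ p → (∫ v in a..p, h v) < 0) := by
        rcases lt_trichotomy a p with hlt | heq | hgt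
        · have hpos : 0 < ∫ v in a..p, (-(h v)) := by
            apply intervalIntegral_pos_of_pos_on ((hhc.neg).intervalIntegrable a p) ?_ hlt
            intro v hv; exact neg_pos.mpr (hL v hv.2)
          rw [intervalIntegral.integral_neg] at hpos
          exact ⟨by linarith, fun _ => by linarith⟩
        · rw [heq]; simp
        · have hpos : 0 < ∫ v in p..a, h v := by
            apply intervalIntegral_pos_of_pos_on (hint p a) ?_ hgt
            intro v hv; exact hM v hv.1 (lt_of_lt_of_le hv.2 har)
          have hsym : (∫ v in a..p, h v) = -∫ v in p..a, h v :=
            intervalIntegral.integral_symm p a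
          rw [hsym]
          exact ⟨by linarith, fun _ => by linarith⟩
      have hT2 : (∫ v in r..b, h v) ≤ 0 ∧ (b ≠ r → (∫ v in r..b, h v) < 0) := by
        rcases lt_trichotomy r b with hlt | heq | hgt
        · have hpos : 0 < ∫ v in r..b, (-(h v)) := by
            apply intervalIntegral_pos_of_pos_on ((hhc.neg).intervalIntegrable r b) ?_ hlt
            intro v hv; exact neg_pos.mpr (hR v hv.1)
          rw [intervalIntegral.integral_neg] at hpos
          exact ⟨by linarith, fun _ => by linarith⟩
        · rw [← heq]; simp
        · have hpos : 0 < ∫ v in b..r, h v := by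
            apply intervalIntegral_pos_of_pos_on (hint b r) ?_ hgt
            intro v hv; exact hM v (lt_of_le_of_lt hpb hv.1) hv.2
          have hsym : (∫ v in r..b, h v) = -∫ v in b..r, h v :=
            intervalIntegral.integral_symm b r
          rw [hsym]
          exact ⟨by linarith, fun _ => by linarith⟩
      rcases hne with hne | hne
      · linarith [hT1.2 hne, hT2.1]
      · linarith [hT1.1, hT2.2 hne]
  -- Claim 2 : quadratic decay near the contact point
  have hquad : ∀ p r a b : ℝ, p ∈ Set.Icc (-B) B → r ∈ Set.Icc (-B) B →
      a ∈ Set.Icc (-B) B → b ∈ Set.Icc (-B) B → p ≤ r → δ ≤ b - a →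
      |a - p| ≤ ε → |b - r| ≤ ε →
      F ((p,r),(a,b)) ≤ -(α*γ/4) * ((p-a)^2 + (r-b)^2) := by
    intro p r a b hpmem hrmem hamem hbmem hpr hba hap hbr
    have hap' := abs_le.mp hap
    have hbr' := abs_le.mp hbr
    have hrp : δ/2 ≤ r - p := by linarith
    obtain ⟨hgl, hgr⟩ := hγle p r hpmem hrmem hrp
    rw [hFeq p r a b]
    set s := NEDsig A p r with hsdef
    have hs : s * (r - p) = A r - A p := NEDsig_RH hdA hA' p r
    have hsl : deriv A p ≤ s := by linarith
    have hsr : s ≤ deriv A r := by linarith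
    set h : ℝ → ℝ := fun v => deriv (deriv η) v * (A p - A v - s * (p - v)) with hhdef
    have hhc : Continuous h := by
      have hAc : Continuous A := hdA.continuous
      rw [hhdef]; fun_prop
    have hint : ∀ c d : ℝ, IntervalIntegrable h MeasureTheory.volume c d :=
      fun c d => hhc.intervalIntegrable c d
    have hT1 : (∫ v in a..p, h v) ≤ -(α*γ/4) * (p-a)^2 := by
      rcases le_or_gt a p with hap2 | hap2
      · have hpt : ∀ v ∈ Set.Icc a p, h v ≤ (-(α*γ)) * (p - v) := by
          intro v hv
          have hvmem : v ∈ Set.Icc (-B) B := ⟨le_trans hamem.1 hv.1, le_trans hv.2 hpmem.2⟩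
          have hch : A p - A v ≤ deriv A p * (p - v) := NEDchord2' hdA hA_conv hv.2
          have hpv : 0 ≤ p - v := sub_nonneg.mpr hv.2
          have hfa : A p - A v - s * (p - v) ≤ -γ * (p - v) := by nlinarith
          have hfneg : A p - A v - s * (p - v) ≤ 0 := by nlinarith
          have hαv := hαle v hvmem
          have step1 : deriv (deriv η) v * (A p - A v - s * (p - v))
              ≤ α * (A p - A v - s * (p - v)) := mul_le_mul_of_nonpos_right hαv hfneg
          have step2 : α * (A p - A v - s * (p - v)) ≤ α * (-γ * (p - v)) :=
            mul_le_mul_of_nonneg_left hfa hα.le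
          calc h v ≤ α * (-γ*(p-v)) := le_trans step1 step2
            _ = (-(α*γ))*(p-v) := by ring
        have hbint : IntervalIntegrable (fun v => (-(α*γ)) * (p - v)) MeasureTheory.volume a p :=
          ((by fun_prop : Continuous fun v : ℝ => (-(α*γ)) * (p - v))).intervalIntegrable a p
        have hmono := intervalIntegral.integral_mono_on hap2 (hint a p) hbint hpt
        have hcm : (∫ v in a..p, (-(α*γ))*(p - v)) = (-(α*γ)) * ((p-a)^2/2) := by
          rw [intervalIntegral.integral_const_mul, NEDpolyA a p]
        rw [hcm] at hmono
        linarith [hmono, mul_nonneg (mul_nonneg hα.le hγ.le) (sq_nonneg (p-a))]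
      · have hpt : ∀ v ∈ Set.Icc p a, (α*(γ/2))*(v - p) ≤ h v := by
          intro v hv
          have hvmem : v ∈ Set.Icc (-B) B := ⟨le_trans hpmem.1 hv.1, le_trans hv.2 hamem.2⟩
          have hch : A v - A p ≤ deriv A v * (v - p) := NEDchord2' hdA hA_conv hv.1
          have hvp : 0 ≤ v - p := sub_nonneg.mpr hv.1
          have hdist : dist v p < ε' := by
            rw [Real.dist_eq]
            have : |v - p| ≤ ε := abs_le.mpr ⟨by linarith, by linarith [hv.2, hap'.2]⟩
            linarith
          have hAv := hUC v hvmem p hpmem hdist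
          rw [Real.dist_eq] at hAv
          have hAv2 := (abs_lt.mp hAv).2
          have hfa : (γ/2) * (v - p) ≤ A p - A v - s * (p - v) := by nlinarith
          have hfnn : 0 ≤ A p - A v - s * (p - v) := le_trans (by nlinarith) hfa
          have hαv := hαle v hvmem
          calc (α*(γ/2))*(v-p) = α * ((γ/2)*(v-p)) := by ring
            _ ≤ α * (A p - A v - s*(p-v)) := mul_le_mul_of_nonneg_left hfa hα.le
            _ ≤ deriv (deriv η) v * (A p - A v - s*(p-v)) :=
                mul_le_mul_of_nonneg_right hαv hfnn
        have hbint : IntervalIntegrable (fun v => (α*(γ/2))*(v - p)) MeasureTheory.volume p a :=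
          ((by fun_prop : Continuous fun v : ℝ => (α*(γ/2))*(v - p))).intervalIntegrable p a
        have hmono := intervalIntegral.integral_mono_on hap2.le hbint (hint p a) hpt
        have hcm : (∫ v in p..a, (α*(γ/2))*(v - p)) = (α*(γ/2)) * ((a-p)^2/2) := by
          rw [intervalIntegral.integral_const_mul, NEDpolyB p a]
        rw [hcm] at hmono
        have hsym : (∫ v in a..p, h v) = -∫ v in p..a, h v :=
          intervalIntegral.integral_symm p a
        rw [hsym]
        linarith [hmono, mul_nonneg (mul_nonneg hα.le hγ.le) (sq_nonneg (a-p))]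
    have hT2 : (∫ v in r..b, h v) ≤ -(α*γ/4) * (r-b)^2 := by
      have hid : ∀ v : ℝ, A p - A v - s * (p - v) = A r - A v - s * (r - v) := by
        intro v; nlinarith [hs]
      rcases le_or_gt r b with hrb2 | hrb2
      · have hpt : ∀ v ∈ Set.Icc r b, h v ≤ (-(α*γ)) * (v - r) := by
          intro v hv
          have hvmem : v ∈ Set.Icc (-B) B := ⟨le_trans hrmem.1 hv.1, le_trans hv.2 hbmem.2⟩
          have hch : deriv A r * (v - r) ≤ A v - A r := NEDchord1' hdA hA_conv hv.1
          have hvr : 0 ≤ v - r := sub_nonneg.mpr hv.1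
          have hfa : A p - A v - s * (p - v) ≤ -γ * (v - r) := by
            rw [hid v]; nlinarith
          have hfneg : A p - A v - s * (p - v) ≤ 0 := by nlinarith
          have hαv := hαle v hvmem
          have step1 : deriv (deriv η) v * (A p - A v - s * (p - v))
              ≤ α * (A p - A v - s * (p - v)) := mul_le_mul_of_nonpos_right hαv hfneg
          have step2 : α * (A p - A v - s * (p - v)) ≤ α * (-γ * (v - r)) :=
            mul_le_mul_of_nonneg_left hfa hα.le
          calc h v ≤ α * (-γ*(v-r)) := le_trans step1 step2
            _ = (-(α*γ))*(v-r) := by ring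
        have hbint : IntervalIntegrable (fun v => (-(α*γ)) * (v - r)) MeasureTheory.volume r b :=
          ((by fun_prop : Continuous fun v : ℝ => (-(α*γ)) * (v - r))).intervalIntegrable r b
        have hmono := intervalIntegral.integral_mono_on hrb2 (hint r b) hbint hpt
        have hcm : (∫ v in r..b, (-(α*γ))*(v - r)) = (-(α*γ)) * ((b-r)^2/2) := by
          rw [intervalIntegral.integral_const_mul, NEDpolyB r b]
        rw [hcm] at hmono
        linarith [hmono, mul_nonneg (mul_nonneg hα.le hγ.le) (sq_nonneg (b-r))]
      · have hpt : ∀ v ∈ Set.Icc b r, (α*(γ/2))*(r - v) ≤ h v := by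
          intro v hv
          have hvmem : v ∈ Set.Icc (-B) B := ⟨le_trans hbmem.1 hv.1, le_trans hv.2 hrmem.2⟩
          have hch : deriv A v * (r - v) ≤ A r - A v := NEDchord1' hdA hA_conv hv.2
          have hrv : 0 ≤ r - v := sub_nonneg.mpr hv.2
          have hdist : dist v r < ε' := by
            rw [Real.dist_eq]
            have : |v - r| ≤ ε := abs_le.mpr ⟨by linarith [hv.1, hbr'.1], by linarith⟩
            linarith
          have hAv := hUC v hvmem r hrmem hdist
          rw [Real.dist_eq] at hAv
          have hAv2 := (abs_lt.mp hAv).1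
          have hfa : (γ/2) * (r - v) ≤ A p - A v - s * (p - v) := by
            rw [hid v]; nlinarith
          have hfnn : 0 ≤ A p - A v - s * (p - v) := le_trans (by nlinarith) hfa
          have hαv := hαle v hvmem
          calc (α*(γ/2))*(r-v) = α * ((γ/2)*(r-v)) := by ring
            _ ≤ α * (A p - A v - s*(p-v)) := mul_le_mul_of_nonneg_left hfa hα.le
            _ ≤ deriv (deriv η) v * (A p - A v - s*(p-v)) :=
                mul_le_mul_of_nonneg_right hαv hfnn
        have hbint : IntervalIntegrable (fun v => (α*(γ/2))*(r - v)) MeasureTheory.volume b r :=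
          ((by fun_prop : Continuous fun v : ℝ => (α*(γ/2))*(r - v))).intervalIntegrable b r
        have hmono := intervalIntegral.integral_mono_on hrb2.le hbint (hint b r) hpt
        have hcm : (∫ v in b..r, (α*(γ/2))*(r - v)) = (α*(γ/2)) * ((r-b)^2/2) := by
          rw [intervalIntegral.integral_const_mul, NEDpolyA b r]
        rw [hcm] at hmono
        have hsym : (∫ v in r..b, h v) = -∫ v in b..r, h v :=
          intervalIntegral.integral_symm b r
        rw [hsym]
        linarith [hmono, mul_nonneg (mul_nonneg hα.le hγ.le) (sq_nonneg (r-b))]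
    linarith
  -- the compact "far" region and its maximum
  set K2 : Set ((ℝ×ℝ)×(ℝ×ℝ)) :=
    (((Set.Icc (-B) B ×ˢ Set.Icc (-B) B)) ×ˢ ((Set.Icc (-B) B ×ˢ Set.Icc (-B) B))) ∩
      ({x | x.1.1 ≤ x.1.2} ∩ ({x | δ ≤ x.2.2 - x.2.1} ∩
        {x | ε ≤ max |x.2.1 - x.1.1| |x.2.2 - x.1.2|})) with hK2def
  have hK2comp : IsCompact K2 := by
    apply ((isCompact_Icc.prod isCompact_Icc).prod (isCompact_Icc.prod isCompact_Icc)).inter_right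
    refine IsClosed.inter (isClosed_le (by fun_prop) (by fun_prop))
      (IsClosed.inter (isClosed_le (by fun_prop) (by fun_prop))
        (isClosed_le (by fun_prop) (by fun_prop)))
  have hm2 : ∃ m2 : ℝ, m2 < 0 ∧ ∀ x ∈ K2, F x ≤ m2 := by
    rcases K2.eq_empty_or_nonempty with hemp | hKne
    · exact ⟨-1, by norm_num, fun x hx => by rw [hemp] at hx; exact absurd hx (Set.notMem_empty x)⟩
    · obtain ⟨x₂, hx₂K, hx₂max⟩ := hK2comp.exists_isMaxOn hKne hFcont.continuousOn
      refine ⟨F x₂, ?_, fun x hx => isMaxOn_iff.mp hx₂max x hx⟩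
      obtain ⟨hbox, hple, hdab, hfar⟩ := hx₂K
      have hple' : x₂.1.1 ≤ x₂.1.2 := hple
      have hdab' : δ ≤ x₂.2.2 - x₂.2.1 := hdab
      have hfar' : ε ≤ max |x₂.2.1 - x₂.1.1| |x₂.2.2 - x₂.1.2| := hfar
      have hne : x₂.2.1 ≠ x₂.1.1 ∨ x₂.2.2 ≠ x₂.1.2 := by
        rcases le_max_iff.mp hfar' with hf | hf
        · left; intro hcont; rw [hcont] at hf; simp at hf; linarith
        · right; intro hcont; rw [hcont] at hf; simp at hf; linarith
      exact hFneg x₂.1.1 x₂.1.2 x₂.2.1 x₂.2.2 hple' (by linarith) hne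
  obtain ⟨m2, hm2neg, hm2le⟩ := hm2
  refine ⟨min (α*γ/4) (-m2/(8*B^2)),
    lt_min (by positivity) (div_pos (by linarith) (by positivity)), ?_⟩
  intro up um bup bum h1 h2 h3 h4 h5 h6
  have hupmem : up ∈ Set.Icc (-B) B := Set.mem_Icc.mpr (abs_le.mp h3)
  have hummem : um ∈ Set.Icc (-B) B := Set.mem_Icc.mpr (abs_le.mp h4)
  have hbupmem : bup ∈ Set.Icc (-B) B := Set.mem_Icc.mpr (abs_le.mp h5)
  have hbummem : bum ∈ Set.Icc (-B) B := Set.mem_Icc.mpr (abs_le.mp h6)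
  have hσeq : σ up um = NEDsig A up um := by
    rcases eq_or_ne up um with he | hne
    · rw [he, hσ_diag, NEDsig_self]
    · rw [hσ_off up um hne, NEDsig_eq hdA hA' hne, ← neg_sub (A um) (A up),
        ← neg_sub um up, neg_div_neg_eq]
  rw [hσeq]
  have hgb : (up - bup)^2 + (um - bum)^2 ≤ 8*B^2 := by
    have k3 := abs_le.mp h3; have k4 := abs_le.mp h4
    have k5 := abs_le.mp h5; have k6 := abs_le.mp h6
    have e1 : (up - bup)^2 ≤ (2*B)^2 := sq_le_sq' (by linarith) (by linarith)
    have e2 : (um - bum)^2 ≤ (2*B)^2 := sq_le_sq' (by linarith) (by linarith)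
    nlinarith [e1, e2]
  have hgnn : (0:ℝ) ≤ (up - bup)^2 + (um - bum)^2 := by positivity
  by_cases hnear : |bup - up| ≤ ε ∧ |bum - um| ≤ ε
  · have hq2 := hquad up um bup bum hupmem hummem hbupmem hbummem h1 h2 hnear.1 hnear.2
    have hce : min (α*γ/4) (-m2/(8*B^2)) ≤ α*γ/4 := min_le_left _ _
    show F ((up,um),(bup,bum)) ≤ _
    have hmul := mul_le_mul_of_nonneg_right hce hgnn
    linarith [hq2, hmul]
  · rw [not_and_or] at hnear
    push_neg at hnear
    have hmemK : ((up,um),(bup,bum)) ∈ K2 :=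
      ⟨⟨⟨hupmem, hummem⟩, ⟨hbupmem, hbummem⟩⟩, h1, h2,
        le_max_iff.mpr (hnear.imp le_of_lt le_of_lt)⟩
    have hFle := hm2le _ hmemK
    have hcle : min (α*γ/4) (-m2/(8*B^2)) ≤ -m2/(8*B^2) := min_le_right _ _
    have hcnn : (0:ℝ) ≤ min (α*γ/4) (-m2/(8*B^2)) :=
      le_min (by positivity) (le_of_lt (div_pos (by linarith) (by positivity)))
    have hmul : min (α*γ/4) (-m2/(8*B^2)) * ((up - bup)^2 + (um - bum)^2)
        ≤ (-m2/(8*B^2)) * (8*B^2) :=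
      mul_le_mul hcle hgb hgnn (le_trans hcnn hcle)
    have heval : (-m2/(8*B^2)) * (8*B^2) = -m2 := by field_simp
    have hkey : min (α*γ/4) (-m2/(8*B^2)) * ((up - bup)^2 + (um - bum)^2) ≤ -m2 :=
      le_trans hmul (le_of_eq heval)
    have hkey2 : m2 ≤ -(min (α*γ/4) (-m2/(8*B^2)) * ((up - bup)^2 + (um - bum)^2)) := by
      have := neg_le_neg hkey
      rwa [neg_neg] at this
    show F ((up,um),(bup,bum)) ≤ _
    rw [neg_mul]
    exact le_trans hFle hkey2
end

section
/- Fix δ > 0 and B > 0. Let A : ℝ → ℝ be three times continuously differentiable and strictly convex, let η : ℝ → ℝ be three times continuously differentiable with η'' > 0 everywhere, and let q : ℝ → ℝ satisfy q'(u) = A'(u)·η'(u) for all u. Then there exists a constant c' > 0 (depending on δ, B, A and η) such that for all u₊, u₋, ū₊, ū₋ ∈ ℝ with u₊ ≤ u₋, ū₋ − ū₊ ≥ δ, and |u₊|, |u₋|, |ū₊|, |ū₋| ≤ B, one has q(u₊;ū₊) − q(u₋;ū₋) − σ(u₊,u₋)·(η(u₊|ū₊) − η(u₋|ū₋)) ≤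 −c'·(σ(ū₊,ū₋) − σ(u₊,u₋))². -/
open Set


private lemma chord_signs {A : ℝ → ℝ} (hA1 : Differentiable ℝ A)
    (hA_conv : StrictConvexOn ℝ Set.univ A)
    {up um σ0 : ℝ} (hup : up ≤ um)
    (hchord : A um - A up = σ0 * (um - up))
    (hσdiag : up = um → σ0 = deriv A up)
    (hσoff : up < um → σ0 = (A up - A um) / (up - um)) :
    (∀ v, up ≤ v → v ≤ um → A v - A up - σ0 * (v - up) ≤ 0) ∧
    (∀ v, um ≤ v → 0 ≤ A v - A up - σ0 * (v - up)) ∧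
    (∀ v, v ≤ up → 0 ≤ A v - A up - σ0 * (v - up)) := by
  have hconv := hA_conv.convexOn
  have hσeq : up < um → σ0 = (A um - A up) / (um - up) := by
    intro h
    rw [hσoff h, ← neg_sub (A um) (A up), ← neg_sub um up, neg_div_neg_eq]
  refine ⟨?_, ?_, ?_⟩
  · intro v h1 h2
    rcases eq_or_lt_of_le h1 with rfl | h1'
    · simp
    rcases eq_or_lt_of_le h2 with rfl | h2'
    · linarith [hchord]
    have hum : up < um := lt_trans h1' h2'
    have := hconv.secant_mono (a := up) (mem_univ up) (mem_univ v) (mem_univ um)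
      (ne_of_gt h1') (ne_of_gt hum) h2
    rw [← hσeq hum] at this
    have hv : 0 < v - up := by linarith
    calc A v - A up - σ0 * (v - up) ≤ (A v - A up) / (v - up) * (v - up) - σ0 * (v - up) := by
          rw [div_mul_cancel₀]; exact ne_of_gt hv
      _ ≤ 0 := by nlinarith [this]
  · intro v h1
    rcases eq_or_lt_of_le h1 with rfl | h1'
    · linarith [hchord]
    rcases eq_or_lt_of_le hup with rfl | hup'
    · -- up = um, tangent line
      have := hconv.deriv_le_slope (mem_univ up) (mem_univ v) h1' (hA1 up)
      rw [slope_def_field, le_div_iff₀ (by linarith : (0:ℝ) < v - up)] at this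
      rw [hσdiag rfl]; linarith
    · have := hconv.secant_mono (a := up) (mem_univ up) (mem_univ um) (mem_univ v)
        (ne_of_gt hup') (ne_of_gt (lt_trans hup' h1')) h1
      rw [← hσeq hup'] at this
      have hv : 0 < v - up := by linarith
      rw [le_div_iff₀ hv] at this
      linarith
  · intro v h1
    rcases eq_or_lt_of_le h1 with rfl | h1'
    · simp
    have halt : A v - A up - σ0 * (v - up) = A v - A um - σ0 * (v - um) := by
      linarith [hchord]
    rcases eq_or_lt_of_le hup with rfl | hup'
    · have := hconv.slope_le_deriv (mem_univ v) (mem_univ up) h1' (hA1 up)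
      rw [slope_def_field, div_le_iff₀ (by linarith : (0:ℝ) < up - v)] at this
      rw [hσdiag rfl]; linarith
    · have := hconv.secant_mono (a := um) (mem_univ um) (mem_univ v) (mem_univ up)
        (by intro hh; rw [hh] at h1'; linarith) (ne_of_lt hup') h1
      have h2 : (A up - A um) / (up - um) = σ0 := (hσoff hup').symm
      rw [h2] at this
      have hv : v - um < 0 := by linarith
      rw [div_le_iff_of_neg hv] at this
      rw [halt]; linarith


private lemma incr_of_deriv_ge {G : ℝ → ℝ} (hG : Differentiable ℝ G) {C x y : ℝ}
    (hxy : x ≤ y) (h : ∀ v, x ≤ v → v ≤ y → C ≤ deriv G v) :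
    C * (y - x) ≤ G y - G x :=
  (convex_Icc x y).mul_sub_le_image_sub_of_le_deriv
    hG.continuous.continuousOn hG.differentiableOn
    (fun v hv => h v (interior_subset hv).1 (interior_subset hv).2)
    x ⟨le_refl x, hxy⟩ y ⟨hxy, le_refl y⟩ hxy

private lemma decr_of_deriv_le {G : ℝ → ℝ} (hG : Differentiable ℝ G) {C x y : ℝ}
    (hxy : x ≤ y) (h : ∀ v, x ≤ v → v ≤ y → deriv G v ≤ C) :
    G y - G x ≤ C * (y - x) :=
  (convex_Icc x y).image_sub_le_mul_sub_of_deriv_le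
    hG.continuous.continuousOn hG.differentiableOn
    (fun v hv => h v (interior_subset hv).1 (interior_subset hv).2)
    x ⟨le_refl x, hxy⟩ y ⟨hxy, le_refl y⟩ hxy

private lemma arith_bound {ε δ M B L s : ℝ} (hε : 0 < ε) (hδ : 0 < δ) (hM : 0 < M)
    (hB : 0 < B) (hδB : δ ≤ 2 * B) (hL0 : 0 ≤ L) (hL : L ≤ 2 * M * B)
    (hs : min δ (L / (2 * M)) ≤ s) :
    ε * δ / (8 * M * B) * L ^ 2 ≤ ε * L / 2 * s := by
  rw [div_mul_eq_mul_div, div_le_iff₀ (by positivity)]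
  rcases le_total δ (L / (2 * M)) with h | h
  · have hδs : δ ≤ s := le_trans (by simp [min_eq_left h]) hs
    nlinarith [mul_nonneg (mul_nonneg (mul_nonneg hε.le hδ.le) hL0) (sub_nonneg.2 hL),
      mul_nonneg (mul_nonneg (mul_nonneg (mul_nonneg hM.le hB.le) hε.le) hL0)
        (by linarith : (0:ℝ) ≤ 2*s - δ)]
  · have hss : L / (2 * M) ≤ s := le_trans (by simp [min_eq_right h]) hs
    have hL' : L ≤ s * (2 * M) := by rwa [div_le_iff₀ (by positivity)] at hss
    have hs0 : 0 ≤ s := le_trans (by positivity) hss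
    nlinarith [mul_nonneg (mul_nonneg (mul_nonneg hε.le hδ.le) hL0) (sub_nonneg.2 hL'),
      mul_nonneg (mul_nonneg (mul_nonneg (mul_nonneg hM.le hε.le) hL0) hs0)
        (by linarith : (0:ℝ) ≤ 2*B - δ)]

set_option maxHeartbeats 1000000 in
private lemma main_estimate {G ℓ W : ℝ → ℝ} {ε M B δ up um bup bum : ℝ}
    (hε : 0 < ε) (hM : 0 < M) (hB : 0 < B) (hδ : 0 < δ) (hδ2B : δ ≤ 2*B)
    (hGdiff : Differentiable ℝ G)
    (hderivG : ∀ v, deriv G v = -(W v * ℓ v))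
    (hW : ∀ v, 0 < W v)
    (hεle : ∀ v, -B ≤ v → v ≤ B → ε ≤ W v)
    (hℓlip : ∀ x y, -B ≤ x → x ≤ y → y ≤ B → |ℓ y - ℓ x| ≤ M * (y - x))
    (hsign_in : ∀ v, up ≤ v → v ≤ um → ℓ v ≤ 0)
    (hsign_right : ∀ v, um ≤ v → 0 ≤ ℓ v)
    (hsign_left : ∀ v, v ≤ up → 0 ≤ ℓ v)
    (hℓup : ℓ up = 0) (hℓum : ℓ um = 0) (hGup : G up = 0)
    (hup : up ≤ um) (hδ' : δ ≤ bum - bup)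
    (hup1 : -B ≤ up) (hup2 : up ≤ B) (hum1 : -B ≤ um) (hum2 : um ≤ B)
    (hbup1 : -B ≤ bup) (hbup2 : bup ≤ B) (hbum1 : -B ≤ bum) (hbum2 : bum ≤ B) :
    ε * δ / (8 * M * B) * (ℓ bup) ^ 2 ≤ G um + G bup - G bum ∧
    ε * δ / (8 * M * B) * (ℓ bum) ^ 2 ≤ G um + G bup - G bum := by
  -- monotonicity of G
  have hmono : ∀ x y, up ≤ x → x ≤ y → y ≤ um → G x ≤ G y := by
    intro x y h1 h2 h3
    have key : ∀ v, x ≤ v → v ≤ y → (0:ℝ) ≤ deriv G v := by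
      intro v hv1 hv2
      rw [hderivG]
      nlinarith [hW v, hsign_in v (by linarith) (by linarith),
        mul_nonneg (hW v).le (neg_nonneg.2 (hsign_in v (by linarith) (by linarith)))]
    have := incr_of_deriv_ge (C := 0) hGdiff h2 key
    linarith
  have hanti_right : ∀ x y, um ≤ x → x ≤ y → G y ≤ G x := by
    intro x y h1 h2
    have key : ∀ v, x ≤ v → v ≤ y → deriv G v ≤ (0:ℝ) := by
      intro v hv1 hv2
      rw [hderivG]
      nlinarith [mul_nonneg (hW v).le (hsign_right v (by linarith))]
    have := decr_of_deriv_le (C := 0) hGdiff h2 key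
    linarith
  have hanti_left : ∀ x y, x ≤ y → y ≤ up → G y ≤ G x := by
    intro x y h1 h2
    have key : ∀ v, x ≤ v → v ≤ y → deriv G v ≤ (0:ℝ) := by
      intro v hv1 hv2
      rw [hderivG]
      nlinarith [mul_nonneg (hW v).le (hsign_left v (by linarith))]
    have := decr_of_deriv_le (C := 0) hGdiff h1 key
    linarith
  have hGnn : ∀ x, x ≤ um → 0 ≤ G x := by
    intro x hx
    rcases le_total x up with h | h
    · have := hanti_left x up h le_rfl; linarith
    · have := hmono up x le_rfl h hx; linarith
  have hGum_max : ∀ x, up ≤ x → G x ≤ G um := by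
    intro x hx
    rcases le_total x um with h | h
    · exact hmono x um hx h le_rfl
    · exact hanti_right um x le_rfl h
  have hDnn : 0 ≤ G um + G bup - G bum := by
    rcases le_total bum up with h | h
    · have h1 : G bum ≤ G bup := hanti_left bup bum (by linarith) h
      have h2 := hGnn um le_rfl
      linarith
    · have h1 : G bum ≤ G um := hGum_max bum h
      rcases le_total bup um with h2 | h2
      · have := hGnn bup h2; linarith
      · have h3 : G bum ≤ G bup := hanti_right bup bum h2 (by linarith)
        have := hGnn um le_rfl
        linarith
  -- quantitative drop lemmas
  have haux1 : ∀ w s, 0 < ℓ w → 0 ≤ s → s ≤ ℓ w / (2*M) → -B ≤ w - s → w ≤ B →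
      ε * ℓ w / 2 * s ≤ G (w - s) - G w := by
    intro w s hL hs0 hsM hwB1 hwB2
    have hMs : M * s ≤ ℓ w / 2 := by
      rw [le_div_iff₀ (by norm_num : (0:ℝ) < 2)]
      have := mul_le_mul_of_nonneg_left hsM hM.le
      have h7 : M * (ℓ w / (2*M)) = ℓ w / 2 := by field_simp
      nlinarith
    have key : ∀ v, w - s ≤ v → v ≤ w → deriv G v ≤ -(ε * ℓ w / 2) := by
      intro v h1 h2
      have hlip := hℓlip v w (by linarith) h2 hwB2
      have h3 : ℓ w - ℓ v ≤ M * (w - v) := le_trans (le_abs_self _) hlip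
      have h3b : M * (w - v) ≤ M * s := mul_le_mul_of_nonneg_left (by linarith) hM.le
      have h4 : ℓ w / 2 ≤ ℓ v := by linarith
      have h5 : ε ≤ W v := hεle v (by linarith) (by linarith)
      rw [hderivG]
      have h6 : ε * (ℓ w / 2) ≤ W v * ℓ v :=
        mul_le_mul h5 h4 (by positivity) (by linarith [hW v])
      linarith
    have := decr_of_deriv_le hGdiff (by linarith : w - s ≤ w) key
    have he : -(ε * ℓ w / 2) * (w - (w - s)) = -(ε * ℓ w / 2 * s) := by ring
    rw [he] at this
    linarith
  have haux2 : ∀ w s, ℓ w < 0 → 0 ≤ s → s ≤ -(ℓ w) / (2*M) → -B ≤ w → w + s ≤ B →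
      ε * (-(ℓ w)) / 2 * s ≤ G (w + s) - G w := by
    intro w s hL hs0 hsM hwB1 hwB2
    have hMs : M * s ≤ -(ℓ w) / 2 := by
      rw [le_div_iff₀ (by norm_num : (0:ℝ) < 2)]
      have := mul_le_mul_of_nonneg_left hsM hM.le
      have h7 : M * (-(ℓ w) / (2*M)) = -(ℓ w) / 2 := by field_simp
      nlinarith
    have key : ∀ v, w ≤ v → v ≤ w + s → ε * (-(ℓ w)) / 2 ≤ deriv G v := by
      intro v h1 h2
      have hlip := hℓlip w v hwB1 h1 (by linarith)
      have h3 : ℓ v - ℓ w ≤ M * (v - w) := le_trans (le_abs_self _) hlip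
      have h3b : M * (v - w) ≤ M * s := mul_le_mul_of_nonneg_left (by linarith) hM.le
      have h4 : ℓ v ≤ ℓ w / 2 := by linarith
      have h5 : ε ≤ W v := hεle v (by linarith) (by linarith)
      rw [hderivG]
      have h6 : ε * (-(ℓ w) / 2) ≤ W v * (-(ℓ v)) :=
        mul_le_mul h5 (by linarith) (by linarith) (by linarith [hW v])
      nlinarith
    have := incr_of_deriv_ge hGdiff (by linarith : w ≤ w + s) key
    have he : ε * (-(ℓ w)) / 2 * (w + s - w) = ε * (-(ℓ w)) / 2 * s := by ring
    rw [he] at this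
    linarith
  have haux3 : ∀ w s, 0 < ℓ w → 0 ≤ s → s ≤ ℓ w / (2*M) → -B ≤ w → w + s ≤ B →
      ε * ℓ w / 2 * s ≤ G w - G (w + s) := by
    intro w s hL hs0 hsM hwB1 hwB2
    have hMs : M * s ≤ ℓ w / 2 := by
      rw [le_div_iff₀ (by norm_num : (0:ℝ) < 2)]
      have := mul_le_mul_of_nonneg_left hsM hM.le
      have h7 : M * (ℓ w / (2*M)) = ℓ w / 2 := by field_simp
      nlinarith
    have key : ∀ v, w ≤ v → v ≤ w + s → deriv G v ≤ -(ε * ℓ w / 2) := by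
      intro v h1 h2
      have hlip := hℓlip w v hwB1 h1 (by linarith)
      have h3 : ℓ w - ℓ v ≤ M * (v - w) := by
        have := neg_abs_le (ℓ v - ℓ w)
        linarith [hlip]
      have h3b : M * (v - w) ≤ M * s := mul_le_mul_of_nonneg_left (by linarith) hM.le
      have h4 : ℓ w / 2 ≤ ℓ v := by linarith
      have h5 : ε ≤ W v := hεle v (by linarith) (by linarith)
      rw [hderivG]
      have h6 : ε * (ℓ w / 2) ≤ W v * ℓ v :=
        mul_le_mul h5 h4 (by positivity) (by linarith [hW v])
      linarith
    have := decr_of_deriv_le hGdiff (by linarith : w ≤ w + s) key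
    have he : -(ε * ℓ w / 2) * (w + s - w) = -(ε * ℓ w / 2 * s) := by ring
    rw [he] at this
    linarith
  have haux4 : ∀ w s, ℓ w < 0 → 0 ≤ s → s ≤ -(ℓ w) / (2*M) → -B ≤ w - s → w ≤ B →
      ε * (-(ℓ w)) / 2 * s ≤ G w - G (w - s) := by
    intro w s hL hs0 hsM hwB1 hwB2
    have hMs : M * s ≤ -(ℓ w) / 2 := by
      rw [le_div_iff₀ (by norm_num : (0:ℝ) < 2)]
      have := mul_le_mul_of_nonneg_left hsM hM.le
      have h7 : M * (-(ℓ w) / (2*M)) = -(ℓ w) / 2 := by field_simp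
      nlinarith
    have key : ∀ v, w - s ≤ v → v ≤ w → ε * (-(ℓ w)) / 2 ≤ deriv G v := by
      intro v h1 h2
      have hlip := hℓlip v w (by linarith) h2 hwB2
      have h3 : ℓ v - ℓ w ≤ M * (w - v) := by
        have := neg_abs_le (ℓ w - ℓ v)
        linarith [hlip]
      have h3b : M * (w - v) ≤ M * s := mul_le_mul_of_nonneg_left (by linarith) hM.le
      have h4 : ℓ v ≤ ℓ w / 2 := by linarith
      have h5 : ε ≤ W v := hεle v (by linarith) (by linarith)
      rw [hderivG]
      have h6 : ε * (-(ℓ w) / 2) ≤ W v * (-(ℓ v)) :=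
        mul_le_mul h5 (by linarith) (by linarith) (by linarith [hW v])
      nlinarith
    have := incr_of_deriv_ge hGdiff (by linarith : w - s ≤ w) key
    have he : ε * (-(ℓ w)) / 2 * (w - (w - s)) = ε * (-(ℓ w)) / 2 * s := by ring
    rw [he] at this
    linarith
  -- global bound on |ℓ|
  have hℓb : ∀ x, -B ≤ x → x ≤ B → |ℓ x| ≤ 2 * M * B := by
    intro x h1 h2
    rcases le_total x um with h | h
    · have h3 := hℓlip x um h1 h hum2
      rw [hℓum, abs_sub_comm] at h3
      have h4 : |ℓ x - 0| ≤ M * (um - x) := by simpa using h3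
      rw [sub_zero] at h4
      calc |ℓ x| ≤ M * (um - x) := h4
        _ ≤ 2 * M * B := by nlinarith
    · have h3 := hℓlip um x hum1 h h2
      rw [hℓum, sub_zero] at h3
      calc |ℓ x| ≤ M * (x - um) := h3
        _ ≤ 2 * M * B := by nlinarith
  constructor
  · -- claim II : bound by ℓ bup
    rcases le_total bup up with hA' | hA'
    · have hL0 : 0 ≤ ℓ bup := hsign_left bup hA'
      rcases eq_or_lt_of_le hL0 with hL | hL
      · rw [← hL]; simpa using hDnn
      have hL2 : ℓ bup ≤ 2*M*B := le_trans (le_abs_self _) (hℓb bup hbup1 hbup2)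
      rcases le_total up bum with hBc | hBc
      · -- s = ℓ bup / (2M), room up - bup
        have hLM : ℓ bup ≤ M * (up - bup) := by
          have h := hℓlip bup up hbup1 hA' hup2
          rw [hℓup] at h
          have h2 := (abs_le.mp h).1
          linarith
        have hhalf : ℓ bup / (2*M) ≤ (up - bup)/2 := by
          rw [div_le_div_iff₀ (by positivity) (by norm_num : (0:ℝ) < 2)]
          nlinarith
        have hs0 : (0:ℝ) ≤ ℓ bup / (2*M) := by positivity
        have hdrop := haux3 bup (ℓ bup / (2*M)) hL hs0 le_rfl hbup1
          (by linarith : bup + ℓ bup / (2*M) ≤ B)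
        have hGmid : G up ≤ G (bup + ℓ bup / (2*M)) :=
          hanti_left (bup + ℓ bup / (2*M)) up (by linarith) le_rfl
        have hGbum : G bum ≤ G um := by
          rcases le_total bum um with h | h
          · exact hmono bum um hBc h le_rfl
          · exact hanti_right um bum le_rfl h
        have harith := arith_bound hε hδ hM hB hδ2B hL0 hL2
          (min_le_right δ (ℓ bup / (2*M)))
        linarith
      · -- bum ≤ up : s = min δ (ℓ bup/(2M))
        have hs0 : (0:ℝ) ≤ min δ (ℓ bup / (2*M)) := le_min hδ.le (by positivity)
        have hsub : bup + min δ (ℓ bup / (2*M)) ≤ bum := by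
          have := min_le_left δ (ℓ bup / (2*M)); linarith
        have hdrop := haux3 bup (min δ (ℓ bup / (2*M))) hL hs0
          (min_le_right δ (ℓ bup / (2*M))) hbup1 (by linarith : bup + min δ (ℓ bup / (2*M)) ≤ B)
        have hGmid : G bum ≤ G (bup + min δ (ℓ bup / (2*M))) :=
          hanti_left (bup + min δ (ℓ bup / (2*M))) bum hsub hBc
        have hGum0 : 0 ≤ G um := hGnn um le_rfl
        have harith := arith_bound hε hδ hM hB hδ2B hL0 hL2
          (le_refl (min δ (ℓ bup / (2*M))))
        linarith
    · rcases le_total bup um with hC' | hC'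
      · -- up ≤ bup ≤ um : L = -ℓ bup
        have hL0 : ℓ bup ≤ 0 := hsign_in bup hA' hC'
        rcases eq_or_lt_of_le hL0 with hL | hL
        · rw [hL]; simpa using hDnn
        have hL0' : 0 ≤ -(ℓ bup) := by linarith
        have hL2 : -(ℓ bup) ≤ 2*M*B := le_trans (neg_le_abs _) (hℓb bup hbup1 hbup2)
        have hLM : -(ℓ bup) ≤ M * (bup - up) := by
          have h := hℓlip up bup hup1 hA' hbup2
          rw [hℓup, sub_zero] at h
          have h2 := (abs_le.mp h).1
          linarith
        have hhalf : -(ℓ bup) / (2*M) ≤ (bup - up)/2 := by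
          rw [div_le_div_iff₀ (by positivity) (by norm_num : (0:ℝ) < 2)]
          nlinarith
        have hs0 : (0:ℝ) ≤ -(ℓ bup) / (2*M) := by positivity
        have hdrop := haux4 bup (-(ℓ bup) / (2*M)) hL hs0 le_rfl
          (by linarith : -B ≤ bup - -(ℓ bup) / (2*M)) hbup2
        have hGmid : 0 ≤ G (bup - -(ℓ bup) / (2*M)) :=
          hGnn (bup - -(ℓ bup) / (2*M)) (by linarith)
        have hGbum : G bum ≤ G um := by
          rcases le_total bum um with h | h
          · exact hmono bum um (by linarith) h le_rfl
          · exact hanti_right um bum le_rfl h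
        have harith := arith_bound hε hδ hM hB hδ2B hL0' hL2
          (min_le_right δ (-(ℓ bup) / (2*M)))
        have hsq : (-(ℓ bup)) ^ 2 = (ℓ bup) ^ 2 := by ring
        rw [hsq] at harith
        linarith
      · -- um ≤ bup : s = min δ (ℓ bup/(2M))
        have hL0 : 0 ≤ ℓ bup := hsign_right bup hC'
        rcases eq_or_lt_of_le hL0 with hL | hL
        · rw [← hL]; simpa using hDnn
        have hL2 : ℓ bup ≤ 2*M*B := le_trans (le_abs_self _) (hℓb bup hbup1 hbup2)
        have hs0 : (0:ℝ) ≤ min δ (ℓ bup / (2*M)) := le_min hδ.le (by positivity)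
        have hsub : bup + min δ (ℓ bup / (2*M)) ≤ bum := by
          have := min_le_left δ (ℓ bup / (2*M)); linarith
        have hdrop := haux3 bup (min δ (ℓ bup / (2*M))) hL hs0
          (min_le_right δ (ℓ bup / (2*M))) hbup1 (by linarith : bup + min δ (ℓ bup / (2*M)) ≤ B)
        have hGmid : G bum ≤ G (bup + min δ (ℓ bup / (2*M))) :=
          hanti_right (bup + min δ (ℓ bup / (2*M))) bum (by linarith) hsub
        have hGum0 : 0 ≤ G um := hGnn um le_rfl
        have harith := arith_bound hε hδ hM hB hδ2B hL0 hL2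
          (le_refl (min δ (ℓ bup / (2*M))))
        linarith
  · -- claim I : bound by ℓ bum
    rcases le_total um bum with hA' | hA'
    · have hL0 : 0 ≤ ℓ bum := hsign_right bum hA'
      rcases eq_or_lt_of_le hL0 with hL | hL
      · rw [← hL]; simpa using hDnn
      have hL2 : ℓ bum ≤ 2*M*B := le_trans (le_abs_self _) (hℓb bum hbum1 hbum2)
      rcases le_total bup um with hb | hb
      · -- s = ℓ bum/(2M), room bum - um
        have hLM : ℓ bum ≤ M * (bum - um) := by
          have h := hℓlip um bum hum1 hA' hbum2
          rw [hℓum, sub_zero] at h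
          have h2 := (abs_le.mp h).2
          linarith
        have hhalf : ℓ bum / (2*M) ≤ (bum - um)/2 := by
          rw [div_le_div_iff₀ (by positivity) (by norm_num : (0:ℝ) < 2)]
          nlinarith
        have hs0 : (0:ℝ) ≤ ℓ bum / (2*M) := by positivity
        have hdrop := haux1 bum (ℓ bum / (2*M)) hL hs0 le_rfl
          (by linarith : -B ≤ bum - ℓ bum / (2*M)) hbum2
        have hGmid : G (bum - ℓ bum / (2*M)) ≤ G um :=
          hanti_right um (bum - ℓ bum / (2*M)) le_rfl (by linarith)
        have hGbup0 : 0 ≤ G bup := hGnn bup hb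
        have harith := arith_bound hε hδ hM hB hδ2B hL0 hL2
          (min_le_right δ (ℓ bum / (2*M)))
        linarith
      · -- um ≤ bup : s = min δ (ℓ bum/(2M)), room bum - bup ≥ δ
        have hs0 : (0:ℝ) ≤ min δ (ℓ bum / (2*M)) := le_min hδ.le (by positivity)
        have hsub : bup ≤ bum - min δ (ℓ bum / (2*M)) := by
          have := min_le_left δ (ℓ bum / (2*M)); linarith
        have hdrop := haux1 bum (min δ (ℓ bum / (2*M))) hL hs0
          (min_le_right δ (ℓ bum / (2*M))) (by linarith : -B ≤ bum - min δ (ℓ bum / (2*M)))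
          hbum2
        have hGmid : G (bum - min δ (ℓ bum / (2*M))) ≤ G bup :=
          hanti_right bup (bum - min δ (ℓ bum / (2*M))) hb hsub
        have hGum0 : 0 ≤ G um := hGnn um le_rfl
        have harith := arith_bound hε hδ hM hB hδ2B hL0 hL2
          (le_refl (min δ (ℓ bum / (2*M))))
        linarith
    · rcases le_total up bum with hb | hb
      · -- up ≤ bum ≤ um : L = -ℓ bum, s = L/(2M), room um - bum
        have hL0 : ℓ bum ≤ 0 := hsign_in bum hb hA'
        rcases eq_or_lt_of_le hL0 with hL | hL
        · rw [hL]; simpa using hDnn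
        have hL0' : 0 ≤ -(ℓ bum) := by linarith
        have hL2 : -(ℓ bum) ≤ 2*M*B := le_trans (neg_le_abs _) (hℓb bum hbum1 hbum2)
        have hLM : -(ℓ bum) ≤ M * (um - bum) := by
          have h := hℓlip bum um hbum1 hA' hum2
          rw [hℓum] at h
          have h2 := (abs_le.mp h).2
          linarith
        have hhalf : -(ℓ bum) / (2*M) ≤ (um - bum)/2 := by
          rw [div_le_div_iff₀ (by positivity) (by norm_num : (0:ℝ) < 2)]
          nlinarith
        have hs0 : (0:ℝ) ≤ -(ℓ bum) / (2*M) := by positivity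
        have hdrop := haux2 bum (-(ℓ bum) / (2*M)) hL hs0 le_rfl hbum1
          (by linarith : bum + -(ℓ bum) / (2*M) ≤ B)
        have hGmid : G (bum + -(ℓ bum) / (2*M)) ≤ G um :=
          hmono (bum + -(ℓ bum) / (2*M)) um (by linarith) (by linarith) le_rfl
        have hGbup0 : 0 ≤ G bup := hGnn bup (by linarith)
        have harith := arith_bound hε hδ hM hB hδ2B hL0' hL2
          (min_le_right δ (-(ℓ bum) / (2*M)))
        have hsq : (-(ℓ bum)) ^ 2 = (ℓ bum) ^ 2 := by ring
        rw [hsq] at harith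
        linarith
      · -- bum ≤ up : s = min δ (ℓ bum/(2M)), room bum - bup ≥ δ
        have hL0 : 0 ≤ ℓ bum := hsign_left bum hb
        rcases eq_or_lt_of_le hL0 with hL | hL
        · rw [← hL]; simpa using hDnn
        have hL2 : ℓ bum ≤ 2*M*B := le_trans (le_abs_self _) (hℓb bum hbum1 hbum2)
        have hs0 : (0:ℝ) ≤ min δ (ℓ bum / (2*M)) := le_min hδ.le (by positivity)
        have hsub : bup ≤ bum - min δ (ℓ bum / (2*M)) := by
          have := min_le_left δ (ℓ bum / (2*M)); linarith
        have hdrop := haux1 bum (min δ (ℓ bum / (2*M))) hL hs0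
          (min_le_right δ (ℓ bum / (2*M))) (by linarith : -B ≤ bum - min δ (ℓ bum / (2*M)))
          hbum2
        have hGmid : G (bum - min δ (ℓ bum / (2*M))) ≤ G bup :=
          hanti_left bup (bum - min δ (ℓ bum / (2*M))) hsub (by linarith)
        have hGum0 : 0 ≤ G um := hGnn um le_rfl
        have harith := arith_bound hε hδ hM hB hδ2B hL0 hL2
          (le_refl (min δ (ℓ bum / (2*M))))
        linarith


private lemma lip_of_deriv_bound {A : ℝ → ℝ} (hA1 : Differentiable ℝ A) {M0 Bl Br : ℝ}
    (hM0 : ∀ v, Bl ≤ v → v ≤ Br → |deriv A v| ≤ M0) :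
    ∀ x y, Bl ≤ x → x ≤ y → y ≤ Br → |A y - A x| ≤ M0 * (y - x) := by
  intro x y h1 h2 h3
  rcases eq_or_lt_of_le h2 with rfl | h2'
  · simp
  · obtain ⟨c, hc, hceq⟩ := exists_deriv_eq_slope A h2' hA1.continuous.continuousOn
      hA1.differentiableOn
    have hAc : A y - A x = deriv A c * (y - x) := by
      rw [hceq, div_mul_cancel₀ _ (ne_of_gt (by linarith : (0:ℝ) < y - x))]
    rw [hAc, abs_mul, abs_of_nonneg (by linarith : (0:ℝ) ≤ y - x)]
    exact mul_le_mul_of_nonneg_right (hM0 c (by linarith [hc.1]) (by linarith [hc.2]))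
      (by linarith)

set_option maxHeartbeats 4000000 in
/-- Negativity of the entropy dissipation controls the square of the difference
of the shock speeds: there is `c' > 0` (depending on `δ`, `B`, `A`, `η`) such that for all
`u₊ ≤ u₋`, `ū₋ − ū₊ ≥ δ`, all in `[−B,B]`:
`q(u₊;ū₊) − q(u₋;ū₋) − σ(u₊,u₋)(η(u₊|ū₊) − η(u₋|ū₋)) ≤ −c'(σ(ū₊,ū₋) − σ(u₊,u₋))²`. -/
theorem negative_entropy_dissipation_speed
    (δ B : ℝ) (hδ : 0 < δ) (hB : 0 < B)
    (A η q : ℝ → ℝ)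
    (hA : ContDiff ℝ 3 A) (hA_conv : StrictConvexOn ℝ Set.univ A)
    (hη : ContDiff ℝ 3 η) (hη'' : ∀ x : ℝ, 0 < deriv (deriv η) x)
    (hq : ∀ u : ℝ, HasDerivAt q (deriv A u * deriv η u) u)
    (σ : ℝ → ℝ → ℝ)
    (hσ_off : ∀ v w : ℝ, v ≠ w → σ v w = (A v - A w) / (v - w))
    (hσ_diag : ∀ v : ℝ, σ v v = deriv A v) :
    ∃ c' > 0, ∀ up um bup bum : ℝ,
      up ≤ um → δ ≤ bum - bup →
      |up| ≤ B → |um| ≤ B → |bup| ≤ B → |bum| ≤ B →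
      ((q up - q bup - deriv η bup * (A up - A bup))
          - (q um - q bum - deriv η bum * (A um - A bum)))
        - σ up um * ((η up - η bup - deriv η bup * (up - bup))
          - (η um - η bum - deriv η bum * (um - bum)))
      ≤ -c' * (σ bup bum - σ up um) ^ 2 := by
  -- basic regularity
  have hA1 : Differentiable ℝ A := hA.differentiable (by norm_num)
  have hAc : Continuous (deriv A) := hA.continuous_deriv (by norm_num)
  have hη1 : Differentiable ℝ η := hη.differentiable (by norm_num)
  have hηd : ContDiff ℝ 2 (deriv η) := by
    have h := hη
    rw [show (3 : WithTop ℕ∞) = 2 + 1 from by norm_num] at h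
    exact (contDiff_succ_iff_deriv.mp h).2.2
  have hη2d : Differentiable ℝ (deriv η) := hηd.differentiable (by norm_num)
  have hη''c : Continuous (deriv (deriv η)) := hηd.continuous_deriv (by norm_num)
  have hBB : -B ≤ B := by linarith
  -- ε : min of η'' on [-B,B]
  obtain ⟨z, hzmem, hzmin⟩ := isCompact_Icc.exists_isMinOn (Set.nonempty_Icc.mpr hBB)
    hη''c.continuousOn
  have hε : 0 < deriv (deriv η) z := hη'' z
  have hεle : ∀ v, -B ≤ v → v ≤ B → deriv (deriv η) z ≤ deriv (deriv η) v :=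
    fun v h1 h2 => hzmin ⟨h1, h2⟩
  -- M0 : max of |A'| on [-B,B]
  obtain ⟨w, hwmem, hwmax⟩ := isCompact_Icc.exists_isMaxOn (Set.nonempty_Icc.mpr hBB)
    (hAc.abs.continuousOn (s := Icc (-B) B))
  have hM0 : ∀ v, -B ≤ v → v ≤ B → |deriv A v| ≤ |deriv A w| := fun v h1 h2 => hwmax ⟨h1, h2⟩
  have hM0nn : 0 ≤ |deriv A w| := abs_nonneg _
  have hAlip := lip_of_deriv_bound hA1 hM0
  have hM : 0 < 2 * |deriv A w| + 1 := by positivity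
  refine ⟨deriv (deriv η) z * δ / (8 * (2 * |deriv A w| + 1) * B) * δ ^ 2 / 4,
    by positivity, ?_⟩
  intro up um bup bum hup hδ2 hupB humB hbupB hbumB
  obtain ⟨hup1, hup2⟩ := abs_le.mp hupB
  obtain ⟨hum1, hum2⟩ := abs_le.mp humB
  obtain ⟨hbup1, hbup2⟩ := abs_le.mp hbupB
  obtain ⟨hbum1, hbum2⟩ := abs_le.mp hbumB
  have hδ2B : δ ≤ 2 * B := by linarith
  have hσdiag : up = um → σ up um = deriv A up := by
    intro h; rw [← h, hσ_diag]
  have hσoff : up < um → σ up um = (A up - A um) / (up - um) := fun h =>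
    hσ_off up um (ne_of_lt h)
  have hchord : A um - A up = σ up um * (um - up) := by
    rcases eq_or_lt_of_le hup with h | h
    · rw [← h]; ring
    · rw [hσoff h, div_mul_eq_mul_div, eq_div_iff (sub_ne_zero.2 (ne_of_lt h))]
      ring
  -- bound on σ up um
  have hσ0B : |σ up um| ≤ |deriv A w| := by
    rcases eq_or_lt_of_le hup with h | h
    · rw [hσdiag h]; exact hM0 up hup1 hup2
    · obtain ⟨c, hc, hceq⟩ := exists_deriv_eq_slope A h hA1.continuous.continuousOn
        hA1.differentiableOn
      have hh : σ up um = deriv A c := by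
        rw [hσoff h, hceq, ← neg_sub (A um) (A up), ← neg_sub um up, neg_div_neg_eq]
      rw [hh]
      exact hM0 c (by linarith [hc.1]) (by linarith [hc.2])
  -- the chord-gap function and companion
  set ℓ : ℝ → ℝ := fun v => A v - A up - σ up um * (v - up) with hℓ_def
  have hℓup : ℓ up = 0 := by simp [hℓ_def]
  have hℓum : ℓ um = 0 := by simp only [hℓ_def]; linarith [hchord]
  have hℓlip : ∀ x y, -B ≤ x → x ≤ y → y ≤ B →
      |ℓ y - ℓ x| ≤ (2 * |deriv A w| + 1) * (y - x) := by
    intro x y h1 h2 h3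
    have h4 := hAlip x y h1 h2 h3
    have h5 : ℓ y - ℓ x = (A y - A x) - σ up um * (y - x) := by simp only [hℓ_def]; ring
    have h6 : |σ up um * (y - x)| ≤ |deriv A w| * (y - x) := by
      rw [abs_mul, abs_of_nonneg (by linarith : (0:ℝ) ≤ y - x)]
      exact mul_le_mul_of_nonneg_right hσ0B (by linarith)
    rw [h5]
    calc |A y - A x - σ up um * (y - x)| ≤ |A y - A x| + |σ up um * (y - x)| := abs_sub _ _
      _ ≤ |deriv A w| * (y - x) + |deriv A w| * (y - x) := add_le_add h4 h6
      _ ≤ (2 * |deriv A w| + 1) * (y - x) := by nlinarith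
  obtain ⟨hsign_in, hsign_right, hsign_left⟩ :=
    chord_signs hA1 hA_conv hup hchord hσdiag hσoff
  set G : ℝ → ℝ := fun v =>
    q v - q up - σ up um * (η v - η up) - deriv η v * (A v - A up - σ up um * (v - up))
    with hG_def
  have hGd : ∀ v, HasDerivAt G (-(deriv (deriv η) v * ℓ v)) v := by
    intro v
    have h2 : HasDerivAt η (deriv η v) v := (hη1 v).hasDerivAt
    have h3 : HasDerivAt (deriv η) (deriv (deriv η) v) v := (hη2d v).hasDerivAt
    have h4 : HasDerivAt A (deriv A v) v := (hA1 v).hasDerivAt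
    have hline : HasDerivAt (fun v => A v - A up - σ up um * (v - up))
        (deriv A v - σ up um * 1) v :=
      (h4.sub_const (A up)).sub (((hasDerivAt_id v).sub_const up).const_mul (σ up um))
    have htot := (((hq v).sub_const (q up)).sub
      ((h2.sub_const (η up)).const_mul (σ up um))).sub (h3.mul hline)
    refine htot.congr_deriv ?_
    simp only [hℓ_def]
    ring
  have hGdiff : Differentiable ℝ G := fun v => (hGd v).differentiableAt
  have hderivG : ∀ v, deriv G v = -(deriv (deriv η) v * ℓ v) := fun v => (hGd v).deriv
  have hGup : G up = 0 := by simp [hG_def]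
  -- key algebraic identity
  have hkey : ((q up - q bup - deriv η bup * (A up - A bup))
          - (q um - q bum - deriv η bum * (A um - A bum)))
        - σ up um * ((η up - η bup - deriv η bup * (up - bup))
          - (η um - η bum - deriv η bum * (um - bum)))
      = G bum - G bup - G um := by
    simp only [hG_def]
    linear_combination (deriv η bum - deriv η um) * hchord
  obtain ⟨hII, hI⟩ := main_estimate hε hM hB hδ hδ2B hGdiff hderivG hη'' hεle hℓlip
    hsign_in hsign_right hsign_left hℓup hℓum hGup hup hδ2
    hup1 hup2 hum1 hum2 hbup1 hbup2 hbum1 hbum2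
  -- conclusion
  have hd : 0 < bum - bup := by linarith
  have hσbar : σ bup bum = (A bup - A bum) / (bup - bum) :=
    hσ_off bup bum (by intro h; rw [h] at hd; linarith)
  have hSd : (σ bup bum - σ up um) * (bum - bup) = ℓ bum - ℓ bup := by
    have e : ℓ bum - ℓ bup = A bum - A bup - σ up um * (bum - bup) := by
      first
        | (simp only [hℓ_def]; ring)
        | ring
    have hbne : bup ≠ bum := by intro hh; rw [hh] at hd; linarith
    have h7 : (A bup - A bum) / (bup - bum) * (bum - bup) = A bum - A bup := by
      rw [div_mul_eq_mul_div, div_eq_iff (sub_ne_zero_of_ne hbne)]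
      ring
    rw [e, hσbar, sub_mul, h7]
  have hc₁ : 0 < deriv (deriv η) z * δ / (8 * (2 * |deriv A w| + 1) * B) := by positivity
  set c₁ := deriv (deriv η) z * δ / (8 * (2 * |deriv A w| + 1) * B) with hc₁_def
  clear_value c₁
  clear_value ℓ
  clear_value G
  have h1 : c₁ * (ℓ bum - ℓ bup) ^ 2 ≤ 4 * (G um + G bup - G bum) := by
    nlinarith [mul_nonneg hc₁.le (sq_nonneg (ℓ bum + ℓ bup))]
  have h2 : c₁ * ((σ bup bum - σ up um) * (bum - bup)) ^ 2 ≤ 4 * (G um + G bup - G bum) := by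
    rw [hSd]; exact h1
  have h3 : c₁ * ((σ bup bum - σ up um) * δ) ^ 2
      ≤ c₁ * ((σ bup bum - σ up um) * (bum - bup)) ^ 2 := by
    have hsq : δ ^ 2 ≤ (bum - bup) ^ 2 := by nlinarith
    nlinarith [mul_nonneg hc₁.le (sq_nonneg (σ bup bum - σ up um)),
      sq_nonneg (σ bup bum - σ up um)]
  rw [hkey]
  nlinarith [h2, h3, sq_nonneg (σ bup bum - σ up um)]
end

section
/- Let δ > 0. Let A : ℝ → ℝ be three times continuously differentiable and strictly convex, let η : ℝ → ℝ be twice continuously differentiable and strictly convex, and let q : ℝ → ℝ satisfy q'(u) = A'(u)·η'(u) for all u. Let u₊, u₋, ū₊, ū₋ ∈ ℝ satisfy u₊ ≤ u₋, u₋ − u₊ ≤ δ/2, and ū₋ − ū₊ ≥ δ. Then q(u₊;ū₊) − q(u₋;ū₋) − σ(u₊,u₋)·(η(u₊|ū₊) − η(u₋|ū₋)) < 0 (strictly). -/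
/-!
Fix the shock `(u₊, u₋)` with speed `σ`, put `ψ t := σ (u₊ - t) - (A u₊ - A t)` and
`G := q - σ η`, so that `G' = η' ψ'`. The dissipation of the statement equals
`(K ū₊ - K u₊) - (K ū₋ - K u₋)` for `K := η' ψ - G`, the Stieltjes integral `∫ ψ dη'`
written via integration by parts. By the Rankine–Hugoniot relation `ψ` vanishes at `u₊` and
`u₋`, and by convexity of `A` it is positive outside `[u₊, u₋]` and nonpositive inside. Hence
`K` increases strictly on `(-∞, u₊]` and on `[u₋, ∞)` and decreases on `[u₊, u₋]`, and since
`ū₋ - ū₊ > u₋ - u₊` the increment of `K` from `u₋` to `ū₋` beats the one from `u₊` to `ū₊`.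
Increments of `K` are bounded by comparing `G` with multiples of `ψ`, so `η` is never
differentiated twice.
-/

open Set

lemma sub_lt_sub_of_strictMonoOn_antitoneOn_strictMonoOn {K : ℝ → ℝ} {a b c d : ℝ}
    (hleft : StrictMonoOn K (Iic a)) (hmid : AntitoneOn K (Icc a b))
    (hright : StrictMonoOn K (Ici b)) (hab : a ≤ b) (hcd : b - a < d - c) :
    K c - K a < K d - K b := by
  have hmid_ab : K b ≤ K a := hmid ⟨le_rfl, hab⟩ ⟨hab, le_rfl⟩ hab
  rcases lt_or_ge a c with hac | hca
  · have hbd : b < d := by linarith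
    have hKbd : K b < K d := hright self_mem_Ici hbd.le hbd
    rcases le_or_gt c b with hcb | hbc
    · have : K c ≤ K a := hmid ⟨le_rfl, hab⟩ ⟨hac.le, hcb⟩ hac.le
      linarith
    · have : K c < K d := hright hbc.le hbd.le (by linarith)
      linarith
  rcases lt_or_ge d b with hdb | hbd
  · have hca' : c < a := by linarith
    have hKca : K c < K a := hleft hca'.le self_mem_Iic hca'
    rcases le_or_gt a d with had | hda
    · have : K b ≤ K d := hmid ⟨had, hdb.le⟩ ⟨hab, le_rfl⟩ hdb.le
      linarith
    · have : K c < K d := hleft hca'.le hda.le (by linarith)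
      linarith
  · have hKca : K c ≤ K a := hleft.monotoneOn hca self_mem_Iic hca
    have hKbd : K b ≤ K d := hright.monotoneOn self_mem_Ici hbd hbd
    rcases hca.lt_or_eq with hca' | rfl
    · linarith [hleft hca'.le self_mem_Iic hca']
    · have hbd' : b < d := by linarith
      linarith [hright self_mem_Ici hbd'.le hbd']

section StieltjesPrimitive

variable {e ψ ψ' G : ℝ → ℝ} {a b c x y ξ : ℝ}

lemma mul_sub_le_sub_of_hasDerivAt (hψ : ∀ t, HasDerivAt ψ (ψ' t) t)
    (hG : ∀ t, HasDerivAt G (e t * ψ' t) t) (hxy : x ≤ y)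
    (hsign : ∀ t ∈ Ioo x y, 0 ≤ (e t - c) * ψ' t) :
    c * (ψ y - ψ x) ≤ G y - G x := by
  have hderiv : ∀ t, HasDerivAt (fun s => G s - c * ψ s) ((e t - c) * ψ' t) t := fun t =>
    ((hG t).sub ((hψ t).const_mul c)).congr_deriv (by ring)
  have hmono : MonotoneOn (fun s => G s - c * ψ s) (Icc x y) := by
    refine monotoneOn_of_hasDerivWithinAt_nonneg (convex_Icc x y)
      (fun t _ => (hderiv t).continuousAt.continuousWithinAt)
      (fun t _ => (hderiv t).hasDerivWithinAt) ?_
    rwa [interior_Icc]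
  have := hmono (left_mem_Icc.2 hxy) (right_mem_Icc.2 hxy) hxy
  linarith

lemma sub_le_mul_sub_of_hasDerivAt (hψ : ∀ t, HasDerivAt ψ (ψ' t) t)
    (hG : ∀ t, HasDerivAt G (e t * ψ' t) t) (hxy : x ≤ y)
    (hsign : ∀ t ∈ Ioo x y, (e t - c) * ψ' t ≤ 0) :
    G y - G x ≤ c * (ψ y - ψ x) := by
  have := mul_sub_le_sub_of_hasDerivAt (ψ := fun t => -ψ t) (G := fun t => -G t)
    (fun t => (hψ t).neg) (fun t => ((hG t).neg).congr_deriv (by ring)) hxy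
    (fun t ht => by nlinarith [hsign t ht])
  linarith

/-- When `G' = e ψ'`, this is `∫ ψ de` up to a constant (integrate by parts); `e` need not be
differentiable. -/
def stieltjesPrimitive (e ψ G : ℝ → ℝ) (t : ℝ) : ℝ := e t * ψ t - G t

lemma stieltjesPrimitive_sub_mem_Icc_of_deriv_nonneg (he : Monotone e)
    (hψ : ∀ t, HasDerivAt ψ (ψ' t) t) (hG : ∀ t, HasDerivAt G (e t * ψ' t) t) (hxy : x ≤ y)
    (hψ' : ∀ t ∈ Ioo x y, 0 ≤ ψ' t) :
    stieltjesPrimitive e ψ G y - stieltjesPrimitive e ψ G x ∈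
      Icc ((e y - e x) * ψ x) ((e y - e x) * ψ y) := by
  have hlow := sub_le_mul_sub_of_hasDerivAt (c := e y) hψ hG hxy fun t ht =>
    mul_nonpos_of_nonpos_of_nonneg (sub_nonpos.2 (he ht.2.le)) (hψ' t ht)
  have hup := mul_sub_le_sub_of_hasDerivAt (c := e x) hψ hG hxy fun t ht =>
    mul_nonneg (sub_nonneg.2 (he ht.1.le)) (hψ' t ht)
  constructor <;> simp only [stieltjesPrimitive] <;> linarith

lemma stieltjesPrimitive_sub_mem_Icc_of_deriv_nonpos (he : Monotone e)
    (hψ : ∀ t, HasDerivAt ψ (ψ' t) t) (hG : ∀ t, HasDerivAt G (e t * ψ' t) t) (hxy : x ≤ y)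
    (hψ' : ∀ t ∈ Ioo x y, ψ' t ≤ 0) :
    stieltjesPrimitive e ψ G y - stieltjesPrimitive e ψ G x ∈
      Icc ((e y - e x) * ψ y) ((e y - e x) * ψ x) := by
  have hlow := sub_le_mul_sub_of_hasDerivAt (c := e x) hψ hG hxy fun t ht =>
    mul_nonpos_of_nonneg_of_nonpos (sub_nonneg.2 (he ht.1.le)) (hψ' t ht)
  have hup := mul_sub_le_sub_of_hasDerivAt (c := e y) hψ hG hxy fun t ht =>
    mul_nonneg_of_nonpos_of_nonpos (sub_nonpos.2 (he ht.2.le)) (hψ' t ht)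
  constructor <;> simp only [stieltjesPrimitive] <;> linarith

lemma strictAntiOn_Iic_of_hasDerivAt_neg (hψ : ∀ t, HasDerivAt ψ (ψ' t) t)
    (hneg : ∀ t < ξ, ψ' t < 0) : StrictAntiOn ψ (Iic ξ) :=
  strictAntiOn_of_hasDerivWithinAt_neg (convex_Iic ξ)
    (fun t _ => (hψ t).continuousAt.continuousWithinAt) (fun t _ => (hψ t).hasDerivWithinAt)
    (by simpa using hneg)

lemma strictMonoOn_Ici_of_hasDerivAt_pos (hψ : ∀ t, HasDerivAt ψ (ψ' t) t)
    (hpos : ∀ t, ξ < t → 0 < ψ' t) : StrictMonoOn ψ (Ici ξ) :=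
  strictMonoOn_of_hasDerivWithinAt_pos (convex_Ici ξ)
    (fun t _ => (hψ t).continuousAt.continuousWithinAt) (fun t _ => (hψ t).hasDerivWithinAt)
    (by simpa using hpos)

lemma stieltjesPrimitive_strictMonoOn_Iic (he : StrictMono e)
    (hψ : ∀ t, HasDerivAt ψ (ψ' t) t) (hG : ∀ t, HasDerivAt G (e t * ψ' t) t)
    (hneg : ∀ t < ξ, ψ' t < 0) (haξ : a ≤ ξ) (hψa : ψ a = 0) :
    StrictMonoOn (stieltjesPrimitive e ψ G) (Iic a) := by
  intro x _ y hy hxy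
  have hanti := strictAntiOn_Iic_of_hasDerivAt_neg hψ hneg
  have hsign : ∀ {s t}, t ≤ a → ∀ u ∈ Ioo s t, ψ' u ≤ 0 := fun ht u hu =>
    (hneg u (hu.2.trans_le (ht.trans haξ))).le
  obtain ⟨m, hxm, hmy⟩ := exists_between hxy
  have h₁ := (stieltjesPrimitive_sub_mem_Icc_of_deriv_nonpos he.monotone hψ hG hxm.le
    (hsign (hmy.le.trans hy))).1
  have h₂ := (stieltjesPrimitive_sub_mem_Icc_of_deriv_nonpos he.monotone hψ hG hmy.le
    (hsign hy)).1
  have hψm : 0 < ψ m :=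
    hψa ▸ hanti ((hmy.trans_le hy).le.trans haξ) haξ (hmy.trans_le hy)
  have hψy : 0 ≤ ψ y := hψa ▸ hanti.antitoneOn (hy.trans haξ) haξ hy
  nlinarith [mul_pos (sub_pos.2 (he hxm)) hψm,
    mul_nonneg (sub_nonneg.2 (he.monotone hmy.le)) hψy]

lemma stieltjesPrimitive_strictMonoOn_Ici (he : StrictMono e)
    (hψ : ∀ t, HasDerivAt ψ (ψ' t) t) (hG : ∀ t, HasDerivAt G (e t * ψ' t) t)
    (hpos : ∀ t, ξ < t → 0 < ψ' t) (hξb : ξ ≤ b) (hψb : ψ b = 0) :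
    StrictMonoOn (stieltjesPrimitive e ψ G) (Ici b) := by
  intro x hx y _ hxy
  have hmono := strictMonoOn_Ici_of_hasDerivAt_pos hψ hpos
  have hsign : ∀ {s t}, b ≤ s → ∀ u ∈ Ioo s t, 0 ≤ ψ' u := fun hs u hu =>
    (hpos u (hξb.trans_lt (hs.trans_lt hu.1))).le
  obtain ⟨m, hxm, hmy⟩ := exists_between hxy
  have h₁ := (stieltjesPrimitive_sub_mem_Icc_of_deriv_nonneg he.monotone hψ hG hxm.le
    (hsign hx)).1
  have h₂ := (stieltjesPrimitive_sub_mem_Icc_of_deriv_nonneg he.monotone hψ hG hmy.le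
    (hsign (hx.trans hxm.le))).1
  have hψx : 0 ≤ ψ x := hψb ▸ hmono.monotoneOn hξb (hξb.trans hx) hx
  have hψm : 0 < ψ m :=
    hψb ▸ hmono hξb (hξb.trans (hx.trans_lt hxm).le) (hx.trans_lt hxm)
  nlinarith [mul_nonneg (sub_nonneg.2 (he.monotone hxm.le)) hψx,
    mul_pos (sub_pos.2 (he hmy)) hψm]

lemma stieltjesPrimitive_antitoneOn_Icc (he : Monotone e)
    (hψ : ∀ t, HasDerivAt ψ (ψ' t) t) (hG : ∀ t, HasDerivAt G (e t * ψ' t) t)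
    (hneg : ∀ t < ξ, ψ' t < 0) (hpos : ∀ t, ξ < t → 0 < ψ' t) (hξ : ξ ∈ Icc a b)
    (hψa : ψ a = 0) (hψb : ψ b = 0) :
    AntitoneOn (stieltjesPrimitive e ψ G) (Icc a b) := by
  have hleft : AntitoneOn (stieltjesPrimitive e ψ G) (Icc a ξ) := by
    intro x hx y hy hxy
    have hK := (stieltjesPrimitive_sub_mem_Icc_of_deriv_nonpos he hψ hG hxy
      fun t ht => (hneg t (ht.2.trans_le hy.2)).le).2
    have hψx : ψ x ≤ 0 :=
      hψa ▸ (strictAntiOn_Iic_of_hasDerivAt_neg hψ hneg).antitoneOn hξ.1 hx.2 hx.1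
    nlinarith [mul_nonpos_of_nonneg_of_nonpos (sub_nonneg.2 (he hxy)) hψx]
  have hright : AntitoneOn (stieltjesPrimitive e ψ G) (Icc ξ b) := by
    intro x hx y hy hxy
    have hK := (stieltjesPrimitive_sub_mem_Icc_of_deriv_nonneg he hψ hG hxy
      fun t ht => (hpos t (hx.1.trans_lt ht.1)).le).2
    have hψy : ψ y ≤ 0 :=
      hψb ▸ (strictMonoOn_Ici_of_hasDerivAt_pos hψ hpos).monotoneOn hy.1 hξ.2 hy.2
    nlinarith [mul_nonpos_of_nonneg_of_nonpos (sub_nonneg.2 (he hxy)) hψy]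
  rw [← Icc_union_Icc_eq_Icc hξ.1 hξ.2]
  exact hleft.union_right hright (isGreatest_Icc hξ.1) (isLeast_Icc hξ.2)

lemma stieltjesPrimitive_sub_lt_sub (he : StrictMono e)
    (hψ : ∀ t, HasDerivAt ψ (ψ' t) t) (hG : ∀ t, HasDerivAt G (e t * ψ' t) t)
    (hneg : ∀ t < ξ, ψ' t < 0) (hpos : ∀ t, ξ < t → 0 < ψ' t) (hξ : ξ ∈ Icc a b)
    (hψa : ψ a = 0) (hψb : ψ b = 0) (hxy : b - a < y - x) :
    stieltjesPrimitive e ψ G x - stieltjesPrimitive e ψ G a <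
      stieltjesPrimitive e ψ G y - stieltjesPrimitive e ψ G b :=
  sub_lt_sub_of_strictMonoOn_antitoneOn_strictMonoOn
    (stieltjesPrimitive_strictMonoOn_Iic he hψ hG hneg hξ.1 hψa)
    (stieltjesPrimitive_antitoneOn_Icc he.monotone hψ hG hneg hpos hξ hψa hψb)
    (stieltjesPrimitive_strictMonoOn_Ici he hψ hG hpos hξ.2 hψb) (hξ.1.trans hξ.2) hxy

end StieltjesPrimitive

section ShockSpeed

variable {A : ℝ → ℝ} {σ : ℝ → ℝ → ℝ}

lemma sub_eq_shockSpeed_mul (hσ_off : ∀ v w : ℝ, v ≠ w → σ v w = (A v - A w) / (v - w))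
    (v w : ℝ) : A w - A v = σ v w * (w - v) := by
  rcases eq_or_ne v w with rfl | hvw
  · ring
  · rw [hσ_off v w hvw]
    field_simp [sub_ne_zero.2 hvw, sub_ne_zero.2 hvw.symm]
    ring

lemma exists_mem_Icc_deriv_eq_shockSpeed (hA : Differentiable ℝ A)
    (hσ_off : ∀ v w : ℝ, v ≠ w → σ v w = (A v - A w) / (v - w))
    (hσ_diag : ∀ v : ℝ, σ v v = deriv A v) {v w : ℝ} (hvw : v ≤ w) :
    ∃ ξ ∈ Icc v w, deriv A ξ = σ v w := by
  rcases hvw.eq_or_lt with rfl | hlt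
  · exact ⟨v, left_mem_Icc.2 le_rfl, (hσ_diag v).symm⟩
  · obtain ⟨ξ, hξ, hslope⟩ :=
      exists_deriv_eq_slope A hlt hA.continuous.continuousOn hA.differentiableOn
    refine ⟨ξ, Ioo_subset_Icc_self hξ, ?_⟩
    rw [hslope, hσ_off v w hlt.ne, ← neg_div_neg_eq, neg_sub, neg_sub]

end ShockSpeed

/-- If `u₊ ≤ u₋`, `u₋ − u₊ ≤ δ/2` and `ū₋ − ū₊ ≥ δ`, then the relative entropy
dissipation of the shock is strictly negative. -/
theorem entropy_dissipation_strictly_negative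
    (δ : ℝ) (hδ : 0 < δ)
    (A η q : ℝ → ℝ)
    (hA : ContDiff ℝ 3 A) (hA_conv : StrictConvexOn ℝ Set.univ A)
    (hη : ContDiff ℝ 2 η) (hη_conv : StrictConvexOn ℝ Set.univ η)
    (hq : ∀ u : ℝ, HasDerivAt q (deriv A u * deriv η u) u)
    (σ : ℝ → ℝ → ℝ)
    (hσ_off : ∀ v w : ℝ, v ≠ w → σ v w = (A v - A w) / (v - w))
    (hσ_diag : ∀ v : ℝ, σ v v = deriv A v)
    (up um bup bum : ℝ)
    (h1 : up ≤ um) (h2 : um - up ≤ δ / 2) (h3 : δ ≤ bum - bup) :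
    ((q up - q bup - deriv η bup * (A up - A bup))
        - (q um - q bum - deriv η bum * (A um - A bum)))
      - σ up um * ((η up - η bup - deriv η bup * (up - bup))
        - (η um - η bum - deriv η bum * (um - bum))) < 0 := by
  have hA_diff : Differentiable ℝ A := hA.differentiable (by norm_num)
  have hη_diff : Differentiable ℝ η := hη.differentiable (by norm_num)
  have hA' : StrictMono (deriv A) := fun x y hxy =>
    hA_conv.strictMonoOn_deriv (fun x _ => hA_diff x) trivial trivial hxy
  have hη' : StrictMono (deriv η) := fun x y hxy =>
    hη_conv.strictMonoOn_deriv (fun x _ => hη_diff x) trivial trivial hxy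
  obtain ⟨ξ, hξ, hσξ⟩ := exists_mem_Icc_deriv_eq_shockSpeed hA_diff hσ_off hσ_diag h1
  have hψ : ∀ t, HasDerivAt (fun t => σ up um * (up - t) - (A up - A t))
      (deriv A t - σ up um) t := fun t =>
    ((((hasDerivAt_id t).const_sub up).const_mul _).sub
      ((hA_diff t).hasDerivAt.const_sub _)).congr_deriv (by ring)
  have hG : ∀ t, HasDerivAt (fun t => q t - σ up um * η t)
      (deriv η t * (deriv A t - σ up um)) t := fun t =>
    ((hq t).sub ((hη_diff t).hasDerivAt.const_mul _)).congr_deriv (by ring)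
  have hψ_um : σ up um * (up - um) - (A up - A um) = 0 := by
    linarith [sub_eq_shockSpeed_mul hσ_off up um]
  have key := stieltjesPrimitive_sub_lt_sub (x := bup) (y := bum) hη' hψ hG
    (fun t ht => sub_neg.2 (hσξ ▸ hA' ht)) (fun t ht => sub_pos.2 (hσξ ▸ hA' ht)) hξ
    (by ring) hψ_um (by linarith)
  simp only [stieltjesPrimitive] at key
  linear_combination key + (deriv η bum - deriv η um) * hψ_um
end
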